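/- arXiv:2209.03092 — 3 statements merged into one kernel-verified Lean document; each statement's English description precedes it below -/
import Mathlib

section
/- Let ω∈𝒟. Then there exists ε=ε(ω)>0 such that ∫_r^1 ω̂(t)(1−t)^{−1−ε} dt ≍ ω̂(r)(1−r)^{−ε} for all 0≤r<1, with comparison constants depending only on ω; in particular the weight z↦ω̂(z)(1−|z|)^{−1−ε} is a regular weight, i.e., it belongs to 𝒟 and its tail integral is comparable to the weight times (1−r). -/
open MeasureTheory Complex Set
open scoped ENNReal

noncomputable section

/-- The open unit disc in the complex plane. -/
def unitDisc : Set ℂ := {z : ℂ | ‖z‖ < 1}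

/-- Normalized area measure `dA = dx dy / π` on `ℂ`. -/
def dA : Measure ℂ := (ENNReal.ofReal Real.pi)⁻¹ • (volume : Measure ℂ)

/-- `ω` is a radial weight: non-negative, radial, integrable on the unit disc. -/
def IsRadialWeight (ω : ℂ → ℝ) : Prop :=
  (∀ z, 0 ≤ ω z) ∧ (∀ z : ℂ, ω z = ω ((‖z‖ : ℝ) : ℂ)) ∧
    IntegrableOn ω unitDisc dA

/-- `ω̂(r) = ∫_r^1 ω(s) ds`. -/
def what (ω : ℂ → ℝ) (r : ℝ) : ℝ := ∫ s in Set.Ioo r 1, ω ((s : ℝ) : ℂ)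

/-- The tail integral `ω̂` is strictly positive on `[0,1)`. -/
def whatPos (ω : ℂ → ℝ) : Prop := ∀ r ∈ Set.Ico (0 : ℝ) 1, 0 < what ω r

/-- The class `𝒟̂`. -/
def InDhat (ω : ℂ → ℝ) : Prop :=
  ∃ C : ℝ, 1 ≤ C ∧ ∀ r ∈ Set.Ico (0 : ℝ) 1, what ω r ≤ C * what ω ((1 + r) / 2)

/-- The class `𝒟̌`. -/
def InDcheck (ω : ℂ → ℝ) : Prop :=
  ∃ K C : ℝ, 1 < K ∧ 1 < C ∧ ∀ r ∈ Set.Ico (0 : ℝ) 1,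
    C * what ω (1 - (1 - r) / K) ≤ what ω r

/-- The class `𝒟 = 𝒟̂ ∩ 𝒟̌`. -/
def InD (ω : ℂ → ℝ) : Prop := InDhat ω ∧ InDcheck ω

/-- The `A^p_ω` (quasi)norm, valued in `ℝ≥0∞`. -/
def ApNorm (p : ℝ) (ω : ℂ → ℝ) (f : ℂ → ℂ) : ℝ≥0∞ :=
  (∫⁻ z in unitDisc, ENNReal.ofReal (‖f z‖ ^ p * ω z) ∂dA) ^ (1 / p)

/-- Moment `ω_x = ∫_0^1 r^x ω(r) dr` of a radial weight. -/
def wmoment (ω : ℂ → ℝ) (x : ℝ) : ℝ := ∫ r in Set.Ioo (0 : ℝ) 1, r ^ x * ω ((r : ℝ) : ℂ)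

/-- Bergman reproducing kernel of `A²_ν`: `B^ν_z(ζ) = ∑ (z̄ζ)^j / (2 ν_{2j+1})`. -/
def Bker (ν : ℂ → ℝ) (z ζ : ℂ) : ℂ :=
  ∑' j : ℕ, ((starRingEnd ℂ) z * ζ) ^ j / ((2 * wmoment ν (2 * (j : ℝ) + 1) : ℝ) : ℂ)

/-- The small Hankel operator `h^η_f(g)(z) = ∫ f(ζ) conj(g(ζ) B^η_z(ζ)) η(ζ) dA(ζ)`. -/
def hankel (η : ℂ → ℝ) (f g : ℂ → ℂ) (z : ℂ) : ℂ :=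
  ∫ ζ in unitDisc, f ζ * (starRingEnd ℂ) (g ζ * Bker η z ζ) * ((η ζ : ℝ) : ℂ) ∂dA

/-- Bounded analytic functions on the unit disc. -/
def IsBddAnalyticOnDisc (g : ℂ → ℂ) : Prop :=
  AnalyticOn ℂ g unitDisc ∧ ∃ M : ℝ, ∀ z ∈ unitDisc, ‖g z‖ ≤ M

/-- `h^η_f : A^p_ω → A^q_ν` is bounded with constant `C`. -/
def HankelBddWith (η ν ω : ℂ → ℝ) (p q : ℝ) (f : ℂ → ℂ) (C : ℝ≥0∞) : Prop :=
  ∀ g : ℂ → ℂ, IsBddAnalyticOnDisc g → ApNorm q ν (hankel η f g) ≤ C * ApNorm p ω g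

/-- `h^η_f : A^p_ω → A^q_ν` is bounded. -/
def HankelBdd (η ν ω : ℂ → ℝ) (p q : ℝ) (f : ℂ → ℂ) : Prop :=
  ∃ C : ℝ≥0∞, C < ⊤ ∧ HankelBddWith η ν ω p q f C

/-- The operator norm of `h^η_f : A^p_ω → A^q_ν` (the least admissible constant). -/
def hankelNorm (η ν ω : ℂ → ℝ) (p q : ℝ) (f : ℂ → ℂ) : ℝ≥0∞ :=
  sInf {C : ℝ≥0∞ | HankelBddWith η ν ω p q f C}

/-- `f ∈ A¹_{ν log}`. -/
def InA1log (ν : ℂ → ℝ) (f : ℂ → ℂ) : Prop :=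
  IntegrableOn
    (fun z => ‖f z‖ * Real.log (Real.exp 1 / (1 - ‖z‖)) * ν z)
    unitDisc dA

end

namespace S15
variable {ω : ℂ → ℝ} {K C ε : ℝ}

lemma what_nonneg (hω0 : ∀ z, 0 ≤ ω z) (r : ℝ) : 0 ≤ what ω r :=
  MeasureTheory.integral_nonneg fun _ => hω0 _

lemma what_eq_zero (r : ℝ) (hr : 1 ≤ r) : what ω r = 0 := by
  simp [what, Set.Ioo_eq_empty (not_lt.2 hr)]

lemma what_anti (hω0 : ∀ z, 0 ≤ ω z)
    (hint : IntegrableOn (fun s : ℝ => ω ((s : ℝ) : ℂ)) (Set.Ioo 0 1) volume)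
    {a b : ℝ} (ha : 0 ≤ a) (hab : a ≤ b) : what ω b ≤ what ω a := by
  rcases le_or_gt 1 b with hb | hb
  · rw [what_eq_zero b hb]; exact what_nonneg hω0 a
  · refine setIntegral_mono_set
      (hint.mono_set (Set.Ioo_subset_Ioo ha le_rfl))
      (Filter.Eventually.of_forall fun s => hω0 _)
      (HasSubset.Subset.eventuallyLE (Set.Ioo_subset_Ioo hab le_rfl))

lemma cover (hK : 1 < K) {r t : ℝ} (hrt : r ≤ t) (ht : t < 1) :
    ∃ n : ℕ, 1 - (1 - r) / K ^ n ≤ t ∧ t < 1 - (1 - r) / K ^ (n + 1) := by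
  have h1t : (0 : ℝ) < 1 - t := by linarith
  have h1r : (0 : ℝ) < 1 - r := by linarith
  set x : ℝ := (1 - r) / (1 - t) with hxdef
  have hx1 : 1 ≤ x := (one_le_div h1t).2 (by linarith)
  obtain ⟨m, hm1, hm2⟩ := exists_mem_Ico_zpow (y := K) (by linarith : (0:ℝ) < x) hK
  have hm0 : 0 ≤ m := by
    by_contra h
    push_neg at h
    have hm1' : m + 1 ≤ 0 := by omega
    have : K ^ (m + 1) ≤ 1 := zpow_le_one_of_nonpos₀ hK.le hm1'
    have := hm2.trans_le this
    linarith
  refine ⟨m.toNat, ?_, ?_⟩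
  · have h1 : (K : ℝ) ^ (m.toNat : ℕ) ≤ x := by
      rw [← zpow_natCast, Int.toNat_of_nonneg hm0]; exact hm1
    have h2 : (1 - t) * K ^ (m.toNat : ℕ) ≤ 1 - r := by
      have := (le_div_iff₀ h1t).1 h1
      linarith
    have h3 : 1 - t ≤ (1 - r) / K ^ (m.toNat : ℕ) :=
      (le_div_iff₀ (pow_pos (by linarith) _)).2 h2
    linarith
  · have h1 : x < (K : ℝ) ^ (m.toNat + 1 : ℕ) := by
      rw [← zpow_natCast]
      have : ((m.toNat + 1 : ℕ) : ℤ) = m + 1 := by omega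
      rw [this]; exact hm2
    have h2 : 1 - r < (1 - t) * K ^ (m.toNat + 1 : ℕ) := by
      have := (div_lt_iff₀ h1t).1 h1
      linarith
    have h3 : (1 - r) / K ^ (m.toNat + 1 : ℕ) < 1 - t :=
      (div_lt_iff₀ (pow_pos (by linarith) _)).2 (by linarith)
    linarith

lemma pow_rpow_comm {K : ℝ} (hK : 0 < K) (ε : ℝ) (m : ℕ) :
    ((K ^ m : ℝ)) ^ ε = (K ^ ε) ^ m := by
  rw [← Real.rpow_natCast K m, ← Real.rpow_mul hK.le, mul_comm,
    Real.rpow_mul hK.le, Real.rpow_natCast]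

lemma iterD (hK : 1 < K) (hC : 0 < C)
    (hDc : ∀ r ∈ Set.Ico (0:ℝ) 1, C * what ω (1 - (1 - r) / K) ≤ what ω r)
    (n : ℕ) : ∀ r ∈ Set.Ico (0:ℝ) 1, C ^ n * what ω (1 - (1 - r) / K ^ n) ≤ what ω r := by
  induction n with
  | zero => intro r hr; simp
  | succ n ih =>
    intro r hr
    obtain ⟨hr0, hr1⟩ := hr
    have hKn : (1 : ℝ) ≤ K ^ n := one_le_pow₀ hK.le
    have hKn0 : (0 : ℝ) < K ^ n := by linarith
    set r' : ℝ := 1 - (1 - r) / K ^ n with hr'def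
    have hr'mem : r' ∈ Set.Ico (0:ℝ) 1 := by
      constructor
      · have : (1 - r) / K ^ n ≤ 1 - r := by
          rw [div_le_iff₀ hKn0]; nlinarith
        simp only [hr'def]; linarith
      · have : 0 < (1 - r) / K ^ n := div_pos (by linarith) hKn0
        simp only [hr'def]; linarith
    have key : 1 - (1 - r') / K = 1 - (1 - r) / K ^ (n + 1) := by
      have : (1 - r') = (1 - r) / K ^ n := by simp [hr'def]
      rw [this, div_div, ← pow_succ]
    have h1 := hDc r' hr'mem
    calc C ^ (n + 1) * what ω (1 - (1 - r) / K ^ (n + 1))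
        = C ^ n * (C * what ω (1 - (1 - r') / K)) := by rw [key]; ring
      _ ≤ C ^ n * what ω r' := by
          exact mul_le_mul_of_nonneg_left h1 (pow_nonneg hC.le n)
      _ ≤ what ω r := ih r ⟨hr0, hr1⟩

lemma Mn_eq (hK : 0 < K) (hC : 0 < C) {r : ℝ} (hr1 : r < 1) (n : ℕ) (w : ℝ) :
    (w / C ^ n) * ((1 - r) / K ^ (n + 1)) ^ (-(1 + ε)) * ((1 - r) / K ^ n)
      = (w * (1 - r) ^ (-ε)) * ((K * K ^ ε) * (K ^ ε / C) ^ n) := by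
  have h1r : (0 : ℝ) < 1 - r := by linarith
  have hKn1 : (0 : ℝ) < K ^ (n + 1) := pow_pos hK _
  have hKε : (0 : ℝ) < K ^ ε := Real.rpow_pos_of_pos hK ε
  have eA : ((1 - r) : ℝ) ^ (-(1 + ε)) = (1 - r) ^ (-ε) * (1 - r)⁻¹ := by
    rw [show (-(1 + ε)) = -ε + (-1) by ring, Real.rpow_add h1r, Real.rpow_neg_one]
  have eB : ((K ^ (n + 1) : ℝ)) ^ (-(1 + ε)) = (K ^ (n + 1) * (K ^ ε) ^ (n + 1))⁻¹ := by
    rw [Real.rpow_neg hKn1.le]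
    congr 1
    rw [Real.rpow_add hKn1, Real.rpow_one, pow_rpow_comm hK]
  rw [Real.div_rpow h1r.le hKn1.le, eA, eB]
  have hKεn : (0 : ℝ) < (K ^ ε) ^ (n + 1) := pow_pos hKε _
  have hCn : (0 : ℝ) < C ^ n := pow_pos hC _
  rw [div_pow]
  field_simp
  ring

lemma pointwise (hω0 : ∀ z, 0 ≤ ω z)
    (hint : IntegrableOn (fun s : ℝ => ω ((s : ℝ) : ℂ)) (Set.Ioo 0 1) volume)
    (hK : 1 < K) (hC : 0 < C) (hε : 0 < ε)
    (hDc : ∀ r ∈ Set.Ico (0:ℝ) 1, C * what ω (1 - (1 - r) / K) ≤ what ω r)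
    {r : ℝ} (hr : r ∈ Set.Ico (0:ℝ) 1) (n : ℕ) {t : ℝ}
    (h1 : 1 - (1 - r) / K ^ n ≤ t) (h2 : t < 1 - (1 - r) / K ^ (n + 1)) :
    what ω t * (1 - t) ^ (-(1 + ε)) ≤
      (what ω r / C ^ n) * ((1 - r) / K ^ (n + 1)) ^ (-(1 + ε)) := by
  obtain ⟨hr0, hr1⟩ := hr
  have hK0 : (0 : ℝ) < K := by linarith
  have h1r : (0 : ℝ) < 1 - r := by linarith
  have hq : (0 : ℝ) < (1 - r) / K ^ (n + 1) := div_pos h1r (pow_pos hK0 _)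
  have hq1t : (1 - r) / K ^ (n + 1) ≤ 1 - t := by linarith
  have h1t : (0 : ℝ) < 1 - t := lt_of_lt_of_le hq hq1t
  have han : 0 ≤ 1 - (1 - r) / K ^ n := by
    have : (1 - r) / K ^ n ≤ 1 - r := by
      rw [div_le_iff₀ (pow_pos hK0 _)]
      nlinarith [one_le_pow₀ (a := K) (n := n) hK.le]
    linarith
  have hwt : what ω t ≤ what ω r / C ^ n := by
    have h3 : what ω t ≤ what ω (1 - (1 - r) / K ^ n) := what_anti hω0 hint han h1
    have h4 := iterD hK hC hDc n r ⟨hr0, hr1⟩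
    rw [le_div_iff₀ (pow_pos hC n)]
    calc what ω t * C ^ n ≤ what ω (1 - (1 - r) / K ^ n) * C ^ n :=
          mul_le_mul_of_nonneg_right h3 (pow_pos hC n).le
      _ ≤ what ω r := by linarith [h4]
  have hrp : (1 - t) ^ (-(1 + ε)) ≤ ((1 - r) / K ^ (n + 1)) ^ (-(1 + ε)) :=
    Real.rpow_le_rpow_of_nonpos hq hq1t (by linarith)
  exact mul_le_mul hwt hrp (Real.rpow_nonneg h1t.le _)
    (div_nonneg (what_nonneg hω0 r) (pow_pos hC n).le)
lemma upperB (hω0 : ∀ z, 0 ≤ ω z)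
    (hint : IntegrableOn (fun s : ℝ => ω ((s : ℝ) : ℂ)) (Set.Ioo 0 1) volume)
    (hK : 1 < K) (hC : 1 < C) (hε : 0 < ε) (hKε : K ^ ε < C)
    (hDc : ∀ r ∈ Set.Ico (0:ℝ) 1, C * what ω (1 - (1 - r) / K) ≤ what ω r)
    {r : ℝ} (hr : r ∈ Set.Ico (0:ℝ) 1) :
    (∫⁻ t in Set.Ioo r 1, ENNReal.ofReal (what ω t * (1 - t) ^ (-(1 + ε)))) ≤
      ENNReal.ofReal (((K * K ^ ε) * (1 - K ^ ε / C)⁻¹) * (what ω r * (1 - r) ^ (-ε))) := by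
  obtain ⟨hr0, hr1⟩ := hr
  have hK0 : (0 : ℝ) < K := by linarith
  have hC0 : (0 : ℝ) < C := by linarith
  have h1r : (0 : ℝ) < 1 - r := by linarith
  have hKε0 : (0 : ℝ) < K ^ ε := Real.rpow_pos_of_pos hK0 ε
  set ρ : ℝ := K ^ ε / C with hρdef
  have hρ0 : 0 < ρ := div_pos hKε0 hC0
  have hρ1 : ρ < 1 := (div_lt_one hC0).2 hKε
  set a : ℕ → ℝ := fun n => 1 - (1 - r) / K ^ n with hadef
  set X : ℝ := what ω r * (1 - r) ^ (-ε) with hXdef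
  have hX0 : 0 ≤ X := mul_nonneg (what_nonneg hω0 r) (Real.rpow_nonneg h1r.le _)
  set M : ℕ → ℝ := fun n =>
    (what ω r / C ^ n) * ((1 - r) / K ^ (n + 1)) ^ (-(1 + ε)) * ((1 - r) / K ^ n) with hMdef
  have hMn : ∀ n, M n = X * ((K * K ^ ε) * ρ ^ n) := fun n => Mn_eq hK0 hC0 hr1 n _
  have hM0 : ∀ n, 0 ≤ M n := fun n => by
    rw [hMn n]; positivity
  have hsub : Set.Ioo r 1 ⊆ ⋃ n : ℕ, Set.Ico (a n) (a (n + 1)) := by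
    intro t ht
    obtain ⟨n, h1, h2⟩ := cover hK ht.1.le ht.2
    exact Set.mem_iUnion.2 ⟨n, h1, h2⟩
  have perN : ∀ n : ℕ,
      (∫⁻ t in Set.Ico (a n) (a (n + 1)), ENNReal.ofReal (what ω t * (1 - t) ^ (-(1 + ε)))) ≤
        ENNReal.ofReal (M n) := by
    intro n
    have hhead : 0 ≤ (what ω r / C ^ n) * ((1 - r) / K ^ (n + 1)) ^ (-(1 + ε)) :=
      mul_nonneg (div_nonneg (what_nonneg hω0 r) (pow_pos hC0 n).le)
        (Real.rpow_nonneg (div_nonneg h1r.le (pow_pos hK0 _).le) _)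
    calc (∫⁻ t in Set.Ico (a n) (a (n + 1)), ENNReal.ofReal (what ω t * (1 - t) ^ (-(1 + ε))))
        ≤ ∫⁻ _ in Set.Ico (a n) (a (n + 1)),
            ENNReal.ofReal ((what ω r / C ^ n) * ((1 - r) / K ^ (n + 1)) ^ (-(1 + ε))) := by
          refine setLIntegral_mono' measurableSet_Ico fun t ht => ?_
          exact ENNReal.ofReal_le_ofReal
            (pointwise hω0 hint hK hC0 hε hDc ⟨hr0, hr1⟩ n ht.1 ht.2)
      _ = ENNReal.ofReal ((what ω r / C ^ n) * ((1 - r) / K ^ (n + 1)) ^ (-(1 + ε))) *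
            volume (Set.Ico (a n) (a (n + 1))) := setLIntegral_const _ _
      _ ≤ ENNReal.ofReal ((what ω r / C ^ n) * ((1 - r) / K ^ (n + 1)) ^ (-(1 + ε))) *
            ENNReal.ofReal ((1 - r) / K ^ n) := by
          gcongr
          rw [Real.volume_Ico]
          refine ENNReal.ofReal_le_ofReal ?_
          have : 0 ≤ (1 - r) / K ^ (n + 1) := div_nonneg h1r.le (pow_pos hK0 _).le
          simp only [hadef]
          linarith
      _ = ENNReal.ofReal (M n) := by
          rw [← ENNReal.ofReal_mul hhead]
  have hsum : Summable M := by
    have : Summable (fun n : ℕ => X * ((K * K ^ ε) * ρ ^ n)) := by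
      refine Summable.mul_left _ (Summable.mul_left _ ?_)
      exact summable_geometric_of_lt_one hρ0.le hρ1
    exact this.congr fun n => (hMn n).symm
  calc (∫⁻ t in Set.Ioo r 1, ENNReal.ofReal (what ω t * (1 - t) ^ (-(1 + ε))))
      ≤ ∫⁻ t in ⋃ n : ℕ, Set.Ico (a n) (a (n + 1)),
          ENNReal.ofReal (what ω t * (1 - t) ^ (-(1 + ε))) := lintegral_mono_set hsub
    _ ≤ ∑' n : ℕ, ∫⁻ t in Set.Ico (a n) (a (n + 1)),
          ENNReal.ofReal (what ω t * (1 - t) ^ (-(1 + ε))) := lintegral_iUnion_le _ _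
    _ ≤ ∑' n : ℕ, ENNReal.ofReal (M n) := ENNReal.tsum_le_tsum perN
    _ = ENNReal.ofReal (∑' n : ℕ, M n) := (ENNReal.ofReal_tsum_of_nonneg hM0 hsum).symm
    _ ≤ ENNReal.ofReal (((K * K ^ ε) * (1 - ρ)⁻¹) * X) := by
        refine ENNReal.ofReal_le_ofReal (le_of_eq ?_)
        have : ∀ n : ℕ, M n = (X * (K * K ^ ε)) * ρ ^ n := fun n => by rw [hMn n]; ring
        rw [tsum_congr this, tsum_mul_left, tsum_geometric_of_lt_one hρ0.le hρ1]
        ring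
lemma lowerB {C₀ : ℝ} (hω0 : ∀ z, 0 ≤ ω z)
    (hint : IntegrableOn (fun s : ℝ => ω ((s : ℝ) : ℂ)) (Set.Ioo 0 1) volume)
    (hC₀ : 1 ≤ C₀) (hε : 0 < ε)
    (hDh : ∀ r ∈ Set.Ico (0:ℝ) 1, what ω r ≤ C₀ * what ω ((1 + r) / 2))
    {r : ℝ} (hr : r ∈ Set.Ico (0:ℝ) 1) :
    ENNReal.ofReal ((2 * C₀)⁻¹ * (what ω r * (1 - r) ^ (-ε))) ≤
      ∫⁻ t in Set.Ioo r 1, ENNReal.ofReal (what ω t * (1 - t) ^ (-(1 + ε))) := by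
  obtain ⟨hr0, hr1⟩ := hr
  have h1r : (0 : ℝ) < 1 - r := by linarith
  set m : ℝ := (1 + r) / 2 with hmdef
  have hrm : r < m := by simp only [hmdef]; linarith
  have hm1 : m < 1 := by simp only [hmdef]; linarith
  have hC₀0 : (0 : ℝ) < C₀ := by linarith
  set κ : ℝ := what ω m * (1 - r) ^ (-(1 + ε)) with hκdef
  have hκ0 : 0 ≤ κ := mul_nonneg (what_nonneg hω0 m) (Real.rpow_nonneg h1r.le _)
  have eA : ((1 - r) : ℝ) ^ (-(1 + ε)) * (1 - r) = (1 - r) ^ (-ε) := by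
    rw [show (-(1 + ε)) = -ε + (-1) by ring, Real.rpow_add h1r, Real.rpow_neg_one]
    field_simp
  have step1 : (2 * C₀)⁻¹ * (what ω r * (1 - r) ^ (-ε)) ≤ κ * (m - r) := by
    have hwm : what ω r / C₀ ≤ what ω m := by
      rw [div_le_iff₀ hC₀0, mul_comm]
      exact hDh r ⟨hr0, hr1⟩
    have hmr : m - r = (1 - r) / 2 := by simp only [hmdef]; ring
    have hκm : κ * (m - r) = what ω m * (1 - r) ^ (-ε) / 2 := by
      rw [hmdef] at hmr ⊢
      rw [hκdef, hmr, ← eA]; ring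
    rw [hκm]
    have hP : (0 : ℝ) ≤ (1 - r) ^ (-ε) := Real.rpow_nonneg h1r.le _
    have := mul_le_mul_of_nonneg_right hwm hP
    calc (2 * C₀)⁻¹ * (what ω r * (1 - r) ^ (-ε))
        = (what ω r / C₀ * (1 - r) ^ (-ε)) / 2 := by ring
      _ ≤ (what ω m * (1 - r) ^ (-ε)) / 2 := by linarith
      _ = what ω m * (1 - r) ^ (-ε) / 2 := by ring
  calc ENNReal.ofReal ((2 * C₀)⁻¹ * (what ω r * (1 - r) ^ (-ε)))
      ≤ ENNReal.ofReal (κ * (m - r)) := ENNReal.ofReal_le_ofReal step1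
    _ = ENNReal.ofReal κ * volume (Set.Ioo r m) := by
        rw [Real.volume_Ioo, ← ENNReal.ofReal_mul hκ0]
    _ = ∫⁻ _ in Set.Ioo r m, ENNReal.ofReal κ := (setLIntegral_const _ _).symm
    _ ≤ ∫⁻ t in Set.Ioo r m, ENNReal.ofReal (what ω t * (1 - t) ^ (-(1 + ε))) := by
        refine setLIntegral_mono' measurableSet_Ioo fun t ht => ?_
        refine ENNReal.ofReal_le_ofReal ?_
        have h1t : (0 : ℝ) < 1 - t := by linarith [ht.2, hm1]
        have hwt : what ω m ≤ what ω t := what_anti hω0 hint (by linarith [ht.1]) ht.2.le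
        have hrp : (1 - r) ^ (-(1 + ε)) ≤ (1 - t) ^ (-(1 + ε)) :=
          Real.rpow_le_rpow_of_nonpos h1t (by linarith [ht.1]) (by linarith)
        exact mul_le_mul hwt hrp (Real.rpow_nonneg h1r.le _) (what_nonneg hω0 t)
    _ ≤ ∫⁻ t in Set.Ioo r 1, ENNReal.ofReal (what ω t * (1 - t) ^ (-(1 + ε))) :=
        lintegral_mono_set (Set.Ioo_subset_Ioo le_rfl hm1.le)
lemma rpow_shift {x ε : ℝ} (hx : 0 < x) : x ^ (-(1 + ε)) * x = x ^ (-ε) := by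
  rw [show (-(1 + ε)) = -ε + (-1) by ring, Real.rpow_add hx, Real.rpow_neg_one]
  field_simp


end S15


/-- Lemma: for `ω ∈ 𝒟` there is `ε > 0` with
`∫_r^1 ω̂(t)(1-t)^{-1-ε} dt ≍ ω̂(r)(1-r)^{-ε}`, so that the weight
`z ↦ ω̂(z)(1-|z|)^{-1-ε}` is a regular weight, in particular a radial weight in `𝒟`. -/
theorem statement15 (ω : ℂ → ℝ) (hω : IsRadialWeight ω) (hωpos : whatPos ω)
    (hωD : InD ω) :
    ∃ ε : ℝ, 0 < ε ∧
      (∃ c C : ℝ, 0 < c ∧ 0 < C ∧ ∀ r ∈ Set.Ico (0 : ℝ) 1,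
        ENNReal.ofReal (c * (what ω r * (1 - r) ^ (-ε))) ≤
            (∫⁻ t in Set.Ioo r 1,
              ENNReal.ofReal (what ω t * (1 - t) ^ (-(1 + ε)))) ∧
          (∫⁻ t in Set.Ioo r 1,
              ENNReal.ofReal (what ω t * (1 - t) ^ (-(1 + ε)))) ≤
            ENNReal.ofReal (C * (what ω r * (1 - r) ^ (-ε)))) ∧
      IsRadialWeight (fun z => what ω (‖z‖) * (1 - ‖z‖) ^ (-(1 + ε))) ∧
      InD (fun z => what ω (‖z‖) * (1 - ‖z‖) ^ (-(1 + ε))) ∧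
      -- regularity: the tail integral of the weight is comparable to the weight times `(1-r)`
      (∃ c C : ℝ, 0 < c ∧ 0 < C ∧ ∀ r ∈ Set.Ico (0 : ℝ) 1,
        c * (what ω r * (1 - r) ^ (-(1 + ε)) * (1 - r)) ≤
            what (fun z => what ω (‖z‖) * (1 - ‖z‖) ^ (-(1 + ε))) r ∧
          what (fun z => what ω (‖z‖) * (1 - ‖z‖) ^ (-(1 + ε))) r ≤
            C * (what ω r * (1 - r) ^ (-(1 + ε)) * (1 - r))) := by
  obtain ⟨hω0, hωrad, hωint2⟩ := hω
  obtain ⟨⟨C₀, hC₀, hDh⟩, ⟨K, C, hK, hC, hDc⟩⟩ := hωD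
  have hK0 : (0:ℝ) < K := by linarith
  have hC0 : (0:ℝ) < C := by linarith
  -- integrability of ω on (0,1)
  have hint : IntegrableOn (fun s : ℝ => ω ((s : ℝ) : ℂ)) (Set.Ioo 0 1) volume := by
    by_contra h
    have h0 := hωpos 0 ⟨le_rfl, one_pos⟩
    have : what ω 0 = 0 := MeasureTheory.integral_undef h
    linarith
  -- choice of ε
  set ε : ℝ := Real.log C / (2 * Real.log K) with hεdef
  have hlogK : 0 < Real.log K := Real.log_pos hK
  have hlogC : 0 < Real.log C := Real.log_pos hC
  have hε : 0 < ε := div_pos hlogC (by positivity)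
  have hKε : K ^ ε < C := by
    have h1 : K ^ ε = Real.exp (Real.log K * ε) := Real.rpow_def_of_pos hK0 ε
    have h2 : Real.log K * ε = Real.log C / 2 := by
      rw [hεdef]; field_simp
    rw [h1, h2]
    calc Real.exp (Real.log C / 2) < Real.exp (Real.log C) :=
          Real.exp_lt_exp.2 (by linarith)
      _ = C := Real.exp_log hC0
  set ρ : ℝ := K ^ ε / C with hρdef
  have hKε0 : (0:ℝ) < K ^ ε := Real.rpow_pos_of_pos hK0 ε
  have hρ0 : 0 < ρ := div_pos hKε0 hC0
  have hρ1 : ρ < 1 := (div_lt_one hC0).2 hKε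
  set cL : ℝ := (2 * C₀)⁻¹ with hcLdef
  set CU : ℝ := (K * K ^ ε) * (1 - ρ)⁻¹ with hCUdef
  have hcL : 0 < cL := by rw [hcLdef]; positivity
  have h1ρ : 0 < 1 - ρ := by linarith
  have hCU : 0 < CU := by rw [hCUdef]; positivity
  -- the new weight
  set W : ℂ → ℝ := fun z => what ω (‖z‖) * (1 - ‖z‖) ^ (-(1 + ε))
    with hWdef
  have hW0 : ∀ z, 0 ≤ W z := by
    intro z
    rcases lt_or_ge ‖z‖ 1 with h | h
    · exact mul_nonneg (S15.what_nonneg hω0 _) (Real.rpow_nonneg (by linarith) _)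
    · simp only [hWdef, S15.what_eq_zero _ h, zero_mul, le_refl]
  have habs : Measurable fun z : ℂ => ‖z‖ := continuous_norm.measurable
  have hganti : Antitone fun t : ℝ => what ω (max t 0) := by
    intro s t hst
    exact S15.what_anti hω0 hint (le_max_right s 0) (max_le_max hst le_rfl)
  have hWabs : Measurable fun z : ℂ => what ω (‖z‖) := by
    have heq : (fun z : ℂ => what ω (‖z‖)) =
        (fun t : ℝ => what ω (max t 0)) ∘ fun z : ℂ => ‖z‖ := by
      funext z
      simp [max_eq_left (norm_nonneg z)]
    rw [heq]
    exact hganti.measurable.comp habs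
  have hWm : Measurable W :=
    hWabs.mul ((measurable_const.sub habs).pow measurable_const)
  -- two-sided estimate on the lintegral
  have hup : ∀ r ∈ Set.Ico (0:ℝ) 1,
      (∫⁻ t in Set.Ioo r 1, ENNReal.ofReal (what ω t * (1 - t) ^ (-(1 + ε)))) ≤
        ENNReal.ofReal (CU * (what ω r * (1 - r) ^ (-ε))) := fun r hr =>
    S15.upperB hω0 hint hK hC hε hKε hDc hr
  have hlo : ∀ r ∈ Set.Ico (0:ℝ) 1,
      ENNReal.ofReal (cL * (what ω r * (1 - r) ^ (-ε))) ≤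
        ∫⁻ t in Set.Ioo r 1, ENNReal.ofReal (what ω t * (1 - t) ^ (-(1 + ε))) := fun r hr =>
    S15.lowerB hω0 hint hC₀ hε hDh hr
  -- identification of `what W`
  have hIeq : ∀ r ∈ Set.Ico (0:ℝ) 1, what W r =
      (∫⁻ t in Set.Ioo r 1, ENNReal.ofReal (what ω t * (1 - t) ^ (-(1 + ε)))).toReal := by
    intro r hr
    have hmeas : AEStronglyMeasurable (fun s : ℝ => W ((s : ℝ) : ℂ))
        (volume.restrict (Set.Ioo r 1)) :=
      ((hWm.comp Complex.measurable_ofReal).aestronglyMeasurable)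
    rw [show what W r = ∫ s in Set.Ioo r 1, W ((s : ℝ) : ℂ) from rfl,
      MeasureTheory.integral_eq_lintegral_of_nonneg_ae
        (Filter.Eventually.of_forall fun s => hW0 _) hmeas]
    congr 1
    refine setLIntegral_congr_fun measurableSet_Ioo
      (fun s hs => ?_)
    have hs0 : 0 < s := lt_of_le_of_lt hr.1 hs.1
    simp only [hWdef, Complex.norm_real, Real.norm_eq_abs, abs_of_pos hs0]
  have hreg : ∀ r ∈ Set.Ico (0:ℝ) 1,
      cL * (what ω r * (1 - r) ^ (-ε)) ≤ what W r ∧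
        what W r ≤ CU * (what ω r * (1 - r) ^ (-ε)) := by
    intro r hr
    have hne : (∫⁻ t in Set.Ioo r 1, ENNReal.ofReal (what ω t * (1 - t) ^ (-(1 + ε)))) ≠ ⊤ :=
      ((hup r hr).trans_lt ENNReal.ofReal_lt_top).ne
    have hX0 : 0 ≤ what ω r * (1 - r) ^ (-ε) :=
      mul_nonneg (S15.what_nonneg hω0 r) (Real.rpow_nonneg (by linarith [hr.2]) _)
    constructor
    · rw [hIeq r hr]
      calc cL * (what ω r * (1 - r) ^ (-ε))
          = (ENNReal.ofReal (cL * (what ω r * (1 - r) ^ (-ε)))).toReal := by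
            rw [ENNReal.toReal_ofReal (by positivity)]
        _ ≤ _ := ENNReal.toReal_mono hne (hlo r hr)
    · rw [hIeq r hr]
      calc (∫⁻ t in Set.Ioo r 1, ENNReal.ofReal (what ω t * (1 - t) ^ (-(1 + ε)))).toReal
          ≤ (ENNReal.ofReal (CU * (what ω r * (1 - r) ^ (-ε)))).toReal :=
            ENNReal.toReal_mono ENNReal.ofReal_ne_top (hup r hr)
        _ = CU * (what ω r * (1 - r) ^ (-ε)) := ENNReal.toReal_ofReal (by positivity)
  -- 2D integrability of `W` on the unit disc
  have hπ : ((NNReal.pi : ℝ≥0∞)) = ENNReal.ofReal Real.pi := by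
    rw [← NNReal.coe_real_pi, ENNReal.ofReal_coe_nnreal]
  have hWint : IntegrableOn W unitDisc dA := by
    refine ⟨hWm.aestronglyMeasurable.restrict, ?_⟩
    rw [MeasureTheory.hasFiniteIntegral_iff_ofReal
      (Filter.Eventually.of_forall fun z => hW0 z)]
    have hres : dA.restrict unitDisc
        = (ENNReal.ofReal Real.pi)⁻¹ • (volume.restrict unitDisc) := by
      simp [dA, Measure.restrict_smul]
    rw [hres, lintegral_smul_measure]
    have hkey : (∫⁻ z in unitDisc, ENNReal.ofReal (W z) ∂volume) < ⊤ := by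
      set a0 : ℕ → ℝ := fun n => 1 - (1 - 0) / K ^ n with ha0def
      set A : ℕ → Set ℂ :=
        fun n => {z : ℂ | a0 n ≤ ‖z‖ ∧ ‖z‖ < a0 (n + 1)} with hAdef
      have ha0n : ∀ n, 0 ≤ a0 n ∧ a0 n < 1 := by
        intro n
        have hKn : (1:ℝ) ≤ K ^ n := one_le_pow₀ hK.le
        have hKn0 : (0:ℝ) < K ^ n := by linarith
        constructor
        · have : (1 - 0 : ℝ) / K ^ n ≤ 1 := by
            rw [div_le_one hKn0]; linarith
          show (0:ℝ) ≤ 1 - (1 - 0) / K ^ n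
          linarith
        · have : (0:ℝ) < (1 - 0) / K ^ n := by positivity
          show (1:ℝ) - (1 - 0) / K ^ n < 1
          linarith
      have hAm : ∀ n, MeasurableSet (A n) := by
        intro n
        have : A n = (fun z : ℂ => ‖z‖) ⁻¹' (Set.Ico (a0 n) (a0 (n + 1))) := rfl
        rw [this]; exact habs measurableSet_Ico
      have hsub : unitDisc ⊆ ⋃ n, A n := by
        intro z hz
        obtain ⟨n, h1, h2⟩ :=
          S15.cover hK (norm_nonneg z) (hz : ‖z‖ < 1)
        exact Set.mem_iUnion.2 ⟨n, h1, h2⟩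
      have hvolA : ∀ n, volume (A n) ≤ ENNReal.ofReal (2 / K ^ n * Real.pi) := by
        intro n
        have hKn0 : (0:ℝ) < K ^ n := pow_pos hK0 n
        have hsub2 : A n ⊆ Metric.ball (0:ℂ) 1 \ Metric.ball 0 (a0 n) := by
          intro z hz
          obtain ⟨hz1, hz2⟩ := hz
          constructor
          · rw [Metric.mem_ball, dist_zero_right]
            exact lt_trans hz2 (ha0n (n + 1)).2
          · rw [Metric.mem_ball, dist_zero_right]
            exact not_lt.2 hz1
        calc volume (A n) ≤ volume (Metric.ball (0:ℂ) 1 \ Metric.ball 0 (a0 n)) :=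
              measure_mono hsub2
          _ = volume (Metric.ball (0:ℂ) 1) - volume (Metric.ball (0:ℂ) (a0 n)) :=
              measure_diff (Metric.ball_subset_ball (by linarith [(ha0n n).2]))
                measurableSet_ball.nullMeasurableSet measure_ball_lt_top.ne
          _ ≤ ENNReal.ofReal (2 / K ^ n * Real.pi) := by
              rw [Complex.volume_ball, Complex.volume_ball, hπ,
                ← ENNReal.ofReal_pow (by norm_num : (0:ℝ) ≤ 1),
                ← ENNReal.ofReal_pow (ha0n n).1,
                ← ENNReal.ofReal_mul (by positivity),
                ← ENNReal.ofReal_mul (by positivity)]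
              rw [tsub_le_iff_right, ← ENNReal.ofReal_add (by positivity) (by positivity)]
              refine ENNReal.ofReal_le_ofReal ?_
              rw [show a0 n = 1 - (1 - 0) / K ^ n from rfl]
              have hring : (1 - (1 - 0) / K ^ n) ^ 2 * Real.pi + 2 / K ^ n * Real.pi
                  - 1 ^ 2 * Real.pi = ((1 - 0) / K ^ n) ^ 2 * Real.pi := by ring
              linarith [mul_nonneg (sq_nonneg ((1 - 0 : ℝ) / K ^ n)) Real.pi_pos.le, hring]
      have hM0nn : ∀ n : ℕ,
          0 ≤ (what ω 0 / C ^ n) * ((1 - 0) / K ^ (n + 1)) ^ (-(1 + ε)) := by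
        intro n
        exact mul_nonneg (div_nonneg (S15.what_nonneg hω0 0) (pow_pos hC0 n).le)
          (Real.rpow_nonneg (by positivity) _)
      have hAint : ∀ n : ℕ, (∫⁻ z in A n, ENNReal.ofReal (W z) ∂volume) ≤
          ENNReal.ofReal ((what ω 0 / C ^ n) * ((1 - 0) / K ^ (n + 1)) ^ (-(1 + ε)) *
            (2 / K ^ n * Real.pi)) := by
        intro n
        calc (∫⁻ z in A n, ENNReal.ofReal (W z) ∂volume)
            ≤ ∫⁻ _ in A n, ENNReal.ofReal
                ((what ω 0 / C ^ n) * ((1 - 0) / K ^ (n + 1)) ^ (-(1 + ε))) ∂volume := by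
              refine setLIntegral_mono' (hAm n) fun z hz => ?_
              refine ENNReal.ofReal_le_ofReal ?_
              exact S15.pointwise hω0 hint hK hC0 hε hDc ⟨le_rfl, one_pos⟩ n hz.1 hz.2
          _ = ENNReal.ofReal ((what ω 0 / C ^ n) * ((1 - 0) / K ^ (n + 1)) ^ (-(1 + ε))) *
                volume (A n) := setLIntegral_const _ _
          _ ≤ ENNReal.ofReal ((what ω 0 / C ^ n) * ((1 - 0) / K ^ (n + 1)) ^ (-(1 + ε))) *
                ENNReal.ofReal (2 / K ^ n * Real.pi) := mul_le_mul_right (hvolA n) _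
          _ = _ := by rw [← ENNReal.ofReal_mul (hM0nn n)]
      have hkey2 : ∀ n : ℕ,
          (what ω 0 / C ^ n) * ((1 - 0) / K ^ (n + 1)) ^ (-(1 + ε)) * (2 / K ^ n * Real.pi)
            = (2 * Real.pi * (what ω 0 * (1 - 0) ^ (-ε)) * (K * K ^ ε)) * ρ ^ n := by
        intro n
        have h := S15.Mn_eq (ε := ε) (K := K) (C := C) hK0 hC0
          (by norm_num : (0:ℝ) < 1) n (what ω 0)
        rw [← hρdef] at h
        linear_combination (2 * Real.pi) * h
      have hBnn : ∀ n : ℕ, 0 ≤ (what ω 0 / C ^ n) *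
          ((1 - 0) / K ^ (n + 1)) ^ (-(1 + ε)) * (2 / K ^ n * Real.pi) := by
        intro n
        refine mul_nonneg (hM0nn n) ?_
        positivity
      have hBsum : Summable (fun n : ℕ => (what ω 0 / C ^ n) *
          ((1 - 0) / K ^ (n + 1)) ^ (-(1 + ε)) * (2 / K ^ n * Real.pi)) := by
        refine Summable.congr (f := fun n : ℕ =>
          (2 * Real.pi * (what ω 0 * (1 - 0) ^ (-ε)) * (K * K ^ ε)) * ρ ^ n) ?_ ?_
        · exact (summable_geometric_of_lt_one hρ0.le hρ1).mul_left _
        · intro n; exact (hkey2 n).symm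
      calc (∫⁻ z in unitDisc, ENNReal.ofReal (W z) ∂volume)
          ≤ ∫⁻ z in ⋃ n, A n, ENNReal.ofReal (W z) ∂volume := lintegral_mono_set hsub
        _ ≤ ∑' n : ℕ, ∫⁻ z in A n, ENNReal.ofReal (W z) ∂volume := lintegral_iUnion_le _ _
        _ ≤ ∑' n : ℕ, ENNReal.ofReal ((what ω 0 / C ^ n) *
              ((1 - 0) / K ^ (n + 1)) ^ (-(1 + ε)) * (2 / K ^ n * Real.pi)) :=
            ENNReal.tsum_le_tsum hAint
        _ = ENNReal.ofReal (∑' n : ℕ, (what ω 0 / C ^ n) *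
              ((1 - 0) / K ^ (n + 1)) ^ (-(1 + ε)) * (2 / K ^ n * Real.pi)) :=
            (ENNReal.ofReal_tsum_of_nonneg hBnn hBsum).symm
        _ < ⊤ := ENNReal.ofReal_lt_top
    exact ENNReal.mul_lt_top (ENNReal.inv_lt_top.2 (ENNReal.ofReal_pos.2 Real.pi_pos)) hkey
  -- radiality
  have hWrad : ∀ z : ℂ, W z = W ((‖z‖ : ℝ) : ℂ) := by
    intro z
    have h : ‖((‖z‖ : ℝ) : ℂ)‖ = ‖z‖ := by
      rw [Complex.norm_real, Real.norm_eq_abs, _root_.abs_of_nonneg (norm_nonneg z)]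
    simp only [hWdef, h]
  have hrad : IsRadialWeight W := ⟨hW0, hWrad, hWint⟩
  -- 𝒟̂ for W
  have hwWnn : ∀ r, 0 ≤ what W r := S15.what_nonneg hW0
  have hDhW : InDhat W := by
    refine ⟨max 1 (CU * C₀ * (2 * C₀)), le_max_left _ _, ?_⟩
    rintro r ⟨hr0, hr1⟩
    set m : ℝ := (1 + r) / 2 with hmdef
    have hm : m ∈ Set.Ico (0:ℝ) 1 := ⟨by rw [hmdef]; linarith, by rw [hmdef]; linarith⟩
    have h1m : (0:ℝ) < 1 - m := by
      have := hm.2; linarith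
    have h1 := (hreg r ⟨hr0, hr1⟩).2
    have h2 := (hreg m hm).1
    have h3 : what ω r ≤ C₀ * what ω m := by rw [hmdef]; exact hDh r ⟨hr0, hr1⟩
    have h4 : (1 - r : ℝ) ^ (-ε) ≤ (1 - m) ^ (-ε) :=
      Real.rpow_le_rpow_of_nonpos h1m (by rw [hmdef]; linarith) (by linarith)
    have hXrm : what ω r * (1 - r) ^ (-ε) ≤ C₀ * (what ω m * (1 - m) ^ (-ε)) := by
      calc what ω r * (1 - r) ^ (-ε) ≤ (C₀ * what ω m) * (1 - m) ^ (-ε) :=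
            mul_le_mul h3 h4 (Real.rpow_nonneg (by linarith) _)
              (mul_nonneg (by linarith) (S15.what_nonneg hω0 m))
        _ = C₀ * (what ω m * (1 - m) ^ (-ε)) := by ring
    have hXm : what ω m * (1 - m) ^ (-ε) ≤ (2 * C₀) * what W m := by
      calc what ω m * (1 - m) ^ (-ε)
          = (2 * C₀) * (cL * (what ω m * (1 - m) ^ (-ε))) := by
            rw [hcLdef]; field_simp
        _ ≤ (2 * C₀) * what W m := mul_le_mul_of_nonneg_left h2 (by linarith)
    calc what W r ≤ CU * (what ω r * (1 - r) ^ (-ε)) := h1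
      _ ≤ CU * (C₀ * ((2 * C₀) * what W m)) := by
          refine mul_le_mul_of_nonneg_left ?_ hCU.le
          exact le_trans hXrm (mul_le_mul_of_nonneg_left hXm (by linarith))
      _ = (CU * C₀ * (2 * C₀)) * what W m := by ring
      _ ≤ max 1 (CU * C₀ * (2 * C₀)) * what W m :=
          mul_le_mul_of_nonneg_right (le_max_right _ _) (hwWnn m)
  -- 𝒟̌ for W
  have hDcW : InDcheck W := by
    have hδ : (0:ℝ) < (8 * C₀ * CU)⁻¹ := by positivity
    obtain ⟨n0, hn0⟩ := exists_pow_lt_of_lt_one hδ hρ1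
    set N : ℕ := n0 + 1 with hNdef
    have hρN : ρ ^ N ≤ (8 * C₀ * CU)⁻¹ := by
      calc ρ ^ N = ρ ^ n0 * ρ := by rw [hNdef, pow_succ]
        _ ≤ ρ ^ n0 * 1 := mul_le_mul_of_nonneg_left hρ1.le (pow_nonneg hρ0.le n0)
        _ = ρ ^ n0 := mul_one _
        _ ≤ _ := hn0.le
    have hKN1 : (1:ℝ) < K ^ N := one_lt_pow₀ hK (by omega)
    refine ⟨(K:ℝ) ^ N, 2, hKN1, one_lt_two, ?_⟩
    rintro r ⟨hr0, hr1⟩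
    have hKN0 : (0:ℝ) < K ^ N := by linarith
    have h1r : (0:ℝ) < 1 - r := by linarith
    set r' : ℝ := 1 - (1 - r) / K ^ N with hr'def
    have h1r' : 1 - r' = (1 - r) / K ^ N := by rw [hr'def]; ring
    have h1r'0 : (0:ℝ) < 1 - r' := by rw [h1r']; positivity
    have hr'mem : r' ∈ Set.Ico (0:ℝ) 1 := by
      constructor
      · have : (1 - r) / K ^ N ≤ 1 - r := by
          rw [div_le_iff₀ hKN0]; nlinarith
        rw [hr'def]; linarith
      · linarith
    have hupr' := (hreg r' hr'mem).2
    have hlor := (hreg r ⟨hr0, hr1⟩).1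
    have hwr' : what ω r' ≤ what ω r / C ^ N := by
      rw [le_div_iff₀ (pow_pos hC0 N)]
      have h := S15.iterD hK hC0 hDc N r ⟨hr0, hr1⟩
      calc what ω r' * C ^ N = C ^ N * what ω r' := mul_comm _ _
        _ ≤ what ω r := h
    have hrpow : ((1:ℝ) - r') ^ (-ε) = (1 - r) ^ (-ε) * (K ^ ε) ^ N := by
      rw [h1r', Real.div_rpow h1r.le hKN0.le, Real.rpow_neg hKN0.le,
        S15.pow_rpow_comm hK0, div_eq_mul_inv, inv_inv]
    have hXr' : what ω r' * (1 - r') ^ (-ε) ≤ ρ ^ N * (what ω r * (1 - r) ^ (-ε)) := by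
      calc what ω r' * (1 - r') ^ (-ε) ≤ (what ω r / C ^ N) * (1 - r') ^ (-ε) :=
            mul_le_mul_of_nonneg_right hwr' (Real.rpow_nonneg h1r'0.le _)
        _ = ρ ^ N * (what ω r * (1 - r) ^ (-ε)) := by
            rw [hrpow, hρdef, div_pow]; ring
    have h2C₀ : what ω r * (1 - r) ^ (-ε) ≤ (2 * C₀) * what W r := by
      calc what ω r * (1 - r) ^ (-ε)
          = (2 * C₀) * (cL * (what ω r * (1 - r) ^ (-ε))) := by rw [hcLdef]; field_simp
        _ ≤ (2 * C₀) * what W r := mul_le_mul_of_nonneg_left hlor (by linarith)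
    have hfinal : what W r' ≤ (CU * ρ ^ N * (2 * C₀)) * what W r := by
      calc what W r' ≤ CU * (what ω r' * (1 - r') ^ (-ε)) := hupr'
        _ ≤ CU * (ρ ^ N * ((2 * C₀) * what W r)) := by
            refine mul_le_mul_of_nonneg_left ?_ hCU.le
            exact le_trans hXr' (mul_le_mul_of_nonneg_left h2C₀ (pow_nonneg hρ0.le N))
        _ = (CU * ρ ^ N * (2 * C₀)) * what W r := by ring
    have hc : CU * ρ ^ N * (2 * C₀) ≤ 1 / 2 := by
      have heq : CU * (8 * C₀ * CU)⁻¹ * (2 * C₀) = 1 / 4 := by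
        field_simp
        ring
      calc CU * ρ ^ N * (2 * C₀) ≤ CU * (8 * C₀ * CU)⁻¹ * (2 * C₀) := by
            refine mul_le_mul_of_nonneg_right
              (mul_le_mul_of_nonneg_left hρN hCU.le) (by linarith)
        _ = 1 / 4 := heq
        _ ≤ 1 / 2 := by norm_num
    have h5 : what W r' ≤ (1 / 2) * what W r :=
      le_trans hfinal (mul_le_mul_of_nonneg_right hc (hwWnn r))
    linarith [h5, hwWnn r]
  -- final identity for the regularity clause
  have hXe : ∀ r : ℝ, r < 1 → what ω r * (1 - r) ^ (-(1 + ε)) * (1 - r)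
      = what ω r * (1 - r) ^ (-ε) := by
    intro r hr1
    have h1r : (0:ℝ) < 1 - r := by linarith
    rw [mul_assoc, S15.rpow_shift h1r]
  refine ⟨ε, hε, ⟨cL, CU, hcL, hCU, fun r hr => ⟨hlo r hr, hup r hr⟩⟩, hrad, ⟨hDhW, hDcW⟩,
    ⟨cL, CU, hcL, hCU, fun r hr => ?_⟩⟩
  rw [hXe r hr.2]
  exact ⟨(hreg r hr).1, (hreg r hr).2⟩
end

section
/- Let 0<p≤1 and ω,ν∈𝒟. Then the radial weight τ(z)=(ν̂(z)/ω̂(z))^p·ω̂(z)/(1−|z|) is regular; equivalently, ∫_r^1 ν̂(s)^p ω̂(s)^{1−p}/(1−s) ds ≍ ν̂(r)^p ω̂(r)^{1−p} for all 0≤r<1, with comparison constants depending only on p, ω and ν. -/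
open MeasureTheory Complex Set
open scoped ENNReal

section aux

variable {ω : ℂ → ℝ}

lemma what_nonneg (hω : ∀ z, 0 ≤ ω z) (r : ℝ) : 0 ≤ what ω r :=
  setIntegral_nonneg measurableSet_Ioo fun s _ => hω _

lemma what_eq_zero {r : ℝ} (hr : 1 ≤ r) : what ω r = 0 := by
  unfold what
  rw [Set.Ioo_eq_empty (not_lt.2 hr)]
  simp

lemma what_integrableOn (hpos : whatPos ω) :
    IntegrableOn (fun s : ℝ => ω ((s : ℝ) : ℂ)) (Set.Ioo (0:ℝ) 1) volume := by
  by_contra h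
  have h2 := hpos 0 ⟨le_refl 0, one_pos⟩
  rw [what, integral_undef h] at h2
  exact lt_irrefl _ h2

lemma what_anti (hω : ∀ z, 0 ≤ ω z) (hpos : whatPos ω) {a b : ℝ} (ha : 0 ≤ a)
    (hab : a ≤ b) : what ω b ≤ what ω a := by
  by_cases hb : 1 ≤ b
  · rw [what_eq_zero hb]; exact what_nonneg hω a
  push_neg at hb
  refine setIntegral_mono_set ?_ (ae_of_all _ fun s => hω _) ?_
  · exact (what_integrableOn hpos).mono_set (Set.Ioo_subset_Ioo ha le_rfl)
  · exact HasSubset.Subset.eventuallyLE (Set.Ioo_subset_Ioo hab le_rfl)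

lemma what_max_measurable (hω : ∀ z, 0 ≤ ω z) (hpos : whatPos ω) :
    Measurable (fun r : ℝ => what ω (max r 0)) := by
  have h : Antitone (fun r : ℝ => what ω (max r 0)) := fun a b hab =>
    what_anti hω hpos (le_max_right a 0) (max_le_max hab le_rfl)
  exact h.measurable

lemma dcheck_iter (hω : ∀ z, 0 ≤ ω z) {K C : ℝ} (hK : 1 < K) (hC : 1 < C)
    (h : ∀ r ∈ Set.Ico (0:ℝ) 1, C * what ω (1 - (1 - r) / K) ≤ what ω r) :
    ∀ n : ℕ, ∀ r ∈ Set.Ico (0:ℝ) 1, what ω (1 - (1 - r) / K ^ n) ≤ what ω r / C ^ n := by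
  intro n
  induction n with
  | zero => intro r _; simp
  | succ n ih =>
    intro r hr
    obtain ⟨hr0, hr1⟩ := hr
    have hKn : (1:ℝ) ≤ K ^ n := one_le_pow₀ hK.le
    have hK0 : (0:ℝ) < K := by linarith
    have hC0 : (0:ℝ) < C := by linarith
    set r' := 1 - (1 - r) / K ^ n with hr'def
    have hr'0 : 0 ≤ r' := by
      have h1 : (1 - r)/K^n ≤ 1 - r := div_le_self (by linarith) hKn
      simp only [hr'def]; linarith
    have hr'1 : r' < 1 := by
      have h1 : 0 < (1-r)/K^n := div_pos (by linarith) (by positivity)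
      simp only [hr'def]; linarith
    have h1 := h r' ⟨hr'0, hr'1⟩
    have h2 := ih r ⟨hr0, hr1⟩
    have key : 1 - (1 - r') / K = 1 - (1 - r) / K ^ (n+1) := by
      have hKn0 : (K:ℝ)^n ≠ 0 := by positivity
      rw [hr'def]
      field_simp
      ring
    calc what ω (1 - (1-r)/K^(n+1)) = what ω (1 - (1-r')/K) := by rw [key]
    _ ≤ what ω r' / C := by rw [le_div_iff₀ hC0]; linarith
    _ ≤ (what ω r / C ^ n) / C := by gcongr
    _ = what ω r / C ^ (n+1) := by rw [div_div, ← pow_succ]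

lemma dcheck_pow_bound (hω : ∀ z, 0 ≤ ω z) (hpos : whatPos ω) (hch : InDcheck ω) :
    ∃ B C : ℝ, 0 < B ∧ 0 < C ∧ ∀ r s : ℝ, 0 ≤ r → r ≤ s → s < 1 →
      what ω s ≤ C * ((1 - s) / (1 - r)) ^ B * what ω r := by
  obtain ⟨K, C, hK, hC, h⟩ := hch
  have hK0 : (0:ℝ) < K := by linarith
  have hC0 : (0:ℝ) < C := by linarith
  set B := Real.log C / Real.log K with hBdef
  have hB0 : 0 < B := div_pos (Real.log_pos hC) (Real.log_pos hK)
  refine ⟨B, C, hB0, hC0, ?_⟩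
  intro r s hr0 hrs hs1
  have hr1 : r < 1 := lt_of_le_of_lt hrs hs1
  have hs0 : (0:ℝ) < 1 - s := by linarith
  set x := (1 - r) / (1 - s) with hxdef
  have hx1 : (1:ℝ) ≤ x := by rw [hxdef, le_div_iff₀ hs0]; linarith
  have hx0 : 0 < x := by linarith
  set t := Real.logb K x with htdef
  have ht0 : 0 ≤ t := Real.logb_nonneg hK hx1
  set n := ⌊t⌋₊ with hndef
  have hnt : (n : ℝ) ≤ t := Nat.floor_le ht0
  have htn : t < n + 1 := Nat.lt_floor_add_one t
  have hKx : (K:ℝ) ^ n ≤ x := by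
    have h1 : (K:ℝ) ^ ((n:ℝ)) ≤ K ^ t := Real.rpow_le_rpow_of_exponent_le hK.le hnt
    rwa [Real.rpow_natCast, htdef, Real.rpow_logb hK0 (ne_of_gt hK) hx0] at h1
  have hKn0 : (0:ℝ) < K ^ n := by positivity
  have hrn0 : 0 ≤ 1 - (1 - r) / K ^ n := by
    have h1 : (1 - r) / K ^ n ≤ 1 - r := div_le_self (by linarith) (one_le_pow₀ hK.le)
    linarith
  have hrnle : 1 - (1 - r) / K ^ n ≤ s := by
    have h2 : 1 - s ≤ (1 - r) / K ^ n := by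
      rw [le_div_iff₀ hKn0]
      calc (1-s) * K^n = K^n * (1-s) := by ring
      _ ≤ x * (1-s) := by gcongr
      _ = 1 - r := by rw [hxdef]; field_simp
    linarith
  have main : what ω s ≤ what ω r / C ^ n :=
    le_trans (what_anti hω hpos hrn0 hrnle) (dcheck_iter hω hK hC h n r ⟨hr0, hr1⟩)
  have hwr : 0 ≤ what ω r := what_nonneg hω r
  -- show x ^ B ≤ C ^ (n+1)
  have hlogK : Real.log K ≠ 0 := ne_of_gt (Real.log_pos hK)
  have hxB : x ^ B ≤ C ^ (n+1) := by
    have hlogx : Real.log x = t * Real.log K := by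
      rw [htdef, Real.logb, div_mul_cancel₀ _ hlogK]
    have h1 : x ^ B = Real.exp (Real.log x * B) := Real.rpow_def_of_pos hx0 B
    have h2 : Real.log x * B = t * Real.log C := by
      rw [hlogx, hBdef]
      field_simp
    have h3 : t * Real.log C ≤ ((n:ℝ)+1) * Real.log C := by
      have := (Real.log_pos hC).le
      nlinarith
    have hcast : ((n:ℝ)+1) = ((n+1 : ℕ) : ℝ) := by push_cast; ring
    calc x ^ B = Real.exp (t * Real.log C) := by rw [h1, h2]
    _ ≤ Real.exp (((n:ℝ)+1) * Real.log C) := Real.exp_le_exp.2 h3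
    _ = C ^ (n+1) := by
        rw [hcast, Real.exp_nat_mul, Real.exp_log hC0]
  -- conclude
  have hxBpos : 0 < x ^ B := Real.rpow_pos_of_pos hx0 B
  have hfin : (C ^ n)⁻¹ ≤ C * ((1-s)/(1-r)) ^ B := by
    have hy : (1-s)/(1-r) = x⁻¹ := by rw [hxdef, inv_div]
    rw [hy, Real.inv_rpow hx0.le]
    rw [inv_le_iff_one_le_mul₀ (by positivity)]
    rw [show C * (x^B)⁻¹ * C^n = (C * C^n) * (x^B)⁻¹ by ring, ← div_eq_mul_inv,
      le_div_iff₀ hxBpos, one_mul, ← pow_succ']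
    exact hxB
  calc what ω s ≤ what ω r / C ^ n := main
  _ = what ω r * (C ^ n)⁻¹ := by rw [div_eq_mul_inv]
  _ ≤ what ω r * (C * ((1-s)/(1-r)) ^ B) := by gcongr
  _ = C * ((1-s)/(1-r)) ^ B * what ω r := by ring

lemma ptw_bound {F : ℝ → ℝ} {B CU : ℝ} (hB0 : 0 < B)
    (claimU : ∀ r s : ℝ, 0 ≤ r → r ≤ s → s < 1 → F s ≤ CU * ((1-s)/(1-r)) ^ B * F r)
    {r s : ℝ} (hr0 : 0 ≤ r) (hrs : r ≤ s) (hs1 : s < 1) :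
    F s / (1-s) ≤ (CU * F r / (1-r) ^ B) * (1-s) ^ (B-1) := by
  have hr1 : r < 1 := lt_of_le_of_lt hrs hs1
  have h1s : (0:ℝ) < 1 - s := by linarith
  have h1r : (0:ℝ) < 1 - r := by linarith
  have h1rB : (0:ℝ) < (1-r) ^ B := Real.rpow_pos_of_pos h1r B
  have e1 : (CU * F r / (1-r) ^ B) * (1-s) ^ (B-1)
      = CU * ((1-s)/(1-r)) ^ B * F r / (1-s) := by
    rw [Real.div_rpow h1s.le h1r.le, Real.rpow_sub h1s, Real.rpow_one]
    field_simp
  rw [e1]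
  gcongr
  exact claimU r s hr0 hrs hs1

lemma upper_est {F : ℝ → ℝ} {B CU : ℝ} (hB0 : 0 < B) (hCU0 : 0 < CU)
    (hFnn : ∀ s, 0 ≤ F s)
    (claimU : ∀ r s : ℝ, 0 ≤ r → r ≤ s → s < 1 → F s ≤ CU * ((1-s)/(1-r)) ^ B * F r)
    {r : ℝ} (hr0 : 0 ≤ r) (hr1 : r < 1) :
    ∫⁻ s in Set.Ioo r 1, ENNReal.ofReal (F s / (1-s)) ≤ ENNReal.ofReal ((CU/B) * F r) := by
  have h1r : (0:ℝ) < 1 - r := by linarith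
  have h1rB : (0:ℝ) < (1-r) ^ B := Real.rpow_pos_of_pos h1r B
  set M : ℝ := CU * F r / (1-r) ^ B with hM
  have hM0 : 0 ≤ M := div_nonneg (mul_nonneg hCU0.le (hFnn r)) h1rB.le
  have step1 : ∫⁻ s in Set.Ioo r 1, ENNReal.ofReal (F s / (1-s))
      ≤ ∫⁻ s in Set.Ioo r 1, ENNReal.ofReal (M * (1-s) ^ (B-1)) := by
    refine lintegral_mono_ae ((ae_restrict_iff' measurableSet_Ioo).2 (ae_of_all _ ?_))
    intro s hs
    exact ENNReal.ofReal_le_ofReal (ptw_bound hB0 claimU hr0 hs.1.le hs.2)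
  have hint : IntegrableOn (fun s : ℝ => (1-s) ^ (B-1)) (Set.Ioo r 1) volume := by
    have h1 : IntervalIntegrable (fun u : ℝ => u ^ (B-1)) volume 0 (1-r) :=
      intervalIntegral.intervalIntegrable_rpow' (by linarith)
    have h2 : IntervalIntegrable (fun s : ℝ => (1-s) ^ (B-1)) volume r 1 := by
      have h3 := (h1.comp_sub_left 1).symm
      simpa using h3
    exact (intervalIntegrable_iff_integrableOn_Ioo_of_le hr1.le).1 h2
  have hval : ∫ s in Set.Ioo r 1, M * (1-s) ^ (B-1) = (CU/B) * F r := by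
    rw [MeasureTheory.integral_const_mul]
    have h3 : ∫ s in Set.Ioo r 1, (1-s) ^ (B-1) = ∫ s in r..1, (1-s) ^ (B-1) := by
      rw [intervalIntegral.integral_of_le hr1.le, integral_Ioc_eq_integral_Ioo]
    have h4 : ∫ s in r..1, (1-s) ^ (B-1) = ∫ u in (0:ℝ)..(1-r), u ^ (B-1) := by
      have h5 := intervalIntegral.integral_comp_sub_left (a := r) (b := 1)
        (fun u : ℝ => u ^ (B-1)) 1
      norm_num at h5
      exact h5
    have h6 : ∫ u in (0:ℝ)..(1-r), u ^ (B-1) = (1-r) ^ B / B := by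
      rw [integral_rpow (Or.inl (by linarith))]
      rw [sub_add_cancel, Real.zero_rpow (ne_of_gt hB0)]
      ring
    rw [h3, h4, h6, hM]
    field_simp
  have step2 : ∫⁻ s in Set.Ioo r 1, ENNReal.ofReal (M * (1-s) ^ (B-1))
      = ENNReal.ofReal ((CU/B) * F r) := by
    rw [← hval]
    refine (ofReal_integral_eq_lintegral_ofReal (hint.const_mul M) ?_).symm
    refine (ae_restrict_iff' measurableSet_Ioo).2 (ae_of_all _ ?_)
    intro s hs
    have : (0:ℝ) < 1 - s := by have := hs.2; simp only [Set.mem_Ioo] at hs; linarith [hs.2]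
    exact mul_nonneg hM0 (Real.rpow_nonneg this.le _)
  exact step1.trans (le_of_eq step2)

lemma lower_est {F : ℝ → ℝ} {CL : ℝ} (hCL0 : 0 < CL)
    (hFnn : ∀ s, 0 ≤ F s)
    (hanti : ∀ a b : ℝ, 0 ≤ a → a ≤ b → F b ≤ F a)
    (claimL : ∀ r ∈ Set.Ico (0:ℝ) 1, F r ≤ CL * F ((1+r)/2))
    {r : ℝ} (hr0 : 0 ≤ r) (hr1 : r < 1) :
    ENNReal.ofReal ((1/(2*CL)) * F r) ≤ ∫⁻ s in Set.Ioo r 1, ENNReal.ofReal (F s / (1-s)) := by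
  set m : ℝ := (1+r)/2 with hm
  have hrm : r < m := by rw [hm]; linarith
  have hm1 : m < 1 := by rw [hm]; linarith
  have h1r : (0:ℝ) < 1 - r := by linarith
  have step1 : ∫⁻ s in Set.Ioo r m, ENNReal.ofReal (F m / (1-r))
      ≤ ∫⁻ s in Set.Ioo r 1, ENNReal.ofReal (F s / (1-s)) := by
    refine le_trans ?_ (lintegral_mono_set (Set.Ioo_subset_Ioo le_rfl hm1.le))
    refine lintegral_mono_ae ((ae_restrict_iff' measurableSet_Ioo).2 (ae_of_all _ ?_))
    intro s hs
    obtain ⟨hs1, hs2⟩ := hs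
    have h1s : (0:ℝ) < 1 - s := by linarith
    refine ENNReal.ofReal_le_ofReal ?_
    calc F m / (1-r) ≤ F m / (1-s) := by
          gcongr
          exact hFnn m
    _ ≤ F s / (1-s) := by
          gcongr
          exact hanti s m (by linarith) hs2.le
  have step2 : ∫⁻ s in Set.Ioo r m, ENNReal.ofReal (F m / (1-r))
      = ENNReal.ofReal (F m / 2) := by
    rw [setLIntegral_const, Real.volume_Ioo,
      ← ENNReal.ofReal_mul (div_nonneg (hFnn m) h1r.le)]
    congr 1
    have : m - r = (1-r)/2 := by rw [hm]; ring
    rw [this]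
    field_simp
  refine le_trans ?_ ((le_of_eq step2.symm).trans step1)
  refine ENNReal.ofReal_le_ofReal ?_
  have h := claimL r ⟨hr0, hr1⟩
  have h2 : (1/(2*CL)) * F r ≤ (1/(2*CL)) * (CL * F m) :=
    mul_le_mul_of_nonneg_left h (by positivity)
  have h3 : (1/(2*CL)) * (CL * F m) = F m / 2 := by
    field_simp
  linarith

lemma lintegral_one_sub_abs_rpow {B : ℝ} (hB : 0 < B) :
    ∫⁻ z in unitDisc, ENNReal.ofReal ((1 - ‖z‖) ^ (B - 1)) ∂(volume : Measure ℂ) < ⊤ := by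
  set q : ℝ := 1/2 with hq
  have hq0 : (0:ℝ) < q := by norm_num
  have hq1 : q < 1 := by norm_num
  set S : ℕ → Set ℂ := fun n => {z : ℂ | 1 - q ^ n ≤ ‖z‖ ∧ ‖z‖ < 1 - q ^ (n+1)} with hS
  have hSmeas : ∀ n, MeasurableSet (S n) := fun n =>
    continuous_norm.measurable measurableSet_Ico
  -- cover
  have hcover : unitDisc ⊆ ⋃ n, S n := by
    intro z hz
    have habs : ‖z‖ < 1 := hz
    have habs0 : 0 ≤ ‖z‖ := norm_nonneg z
    have h0 : 0 < 1 - ‖z‖ := by linarith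
    obtain ⟨n, hn⟩ := exists_pow_lt_of_lt_one h0 hq1
    have hP : ∃ n, q ^ n < 1 - ‖z‖ := ⟨n, hn⟩
    classical
    have hn0 : q ^ (Nat.find hP) < 1 - ‖z‖ := Nat.find_spec hP
    have hne : Nat.find hP ≠ 0 := by
      intro h
      rw [h] at hn0
      simp only [pow_zero] at hn0
      linarith
    obtain ⟨m, hm⟩ := Nat.exists_eq_succ_of_ne_zero hne
    have hnot : ¬ (q ^ m < 1 - ‖z‖) := Nat.find_min hP (by omega)
    push_neg at hnot
    refine Set.mem_iUnion.2 ⟨m, ?_, ?_⟩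
    · linarith
    · rw [hm] at hn0
      have hn0' : q ^ (m+1) < 1 - ‖z‖ := hn0
      exact lt_sub_comm.mp hn0'
  -- volume bound
  have hpi : ((NNReal.pi : ℝ≥0∞)) = ENNReal.ofReal Real.pi := by
    rw [← ENNReal.ofReal_coe_nnreal, NNReal.coe_real_pi]
  have hvolball : ∀ t : ℝ, 0 ≤ t → volume (Metric.ball (0:ℂ) t) = ENNReal.ofReal (t^2 * Real.pi) := by
    intro t ht
    rw [Complex.volume_ball, hpi, ← ENNReal.ofReal_pow ht, ← ENNReal.ofReal_mul (by positivity)]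
  have hvol : ∀ n, volume (S n) ≤ ENNReal.ofReal (Real.pi * q ^ n) := by
    intro n
    have hqn0 : (0:ℝ) < q ^ n := by positivity
    have hqn1 : q ^ n ≤ 1 := pow_le_one₀ hq0.le hq1.le
    have hqs : q ^ (n+1) = q^n * q := by ring
    have hsub : S n ⊆ Metric.ball (0:ℂ) (1 - q^(n+1)) \ Metric.ball 0 (1 - q^n) := by
      intro z hz
      obtain ⟨h1, h2⟩ := hz
      constructor
      · rw [Metric.mem_ball, dist_zero_right]; exact h2
      · rw [Metric.mem_ball, dist_zero_right]
        push_neg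
        exact h1
    refine (measure_mono hsub).trans ?_
    rw [measure_diff (Metric.ball_subset_ball (by nlinarith)) measurableSet_ball.nullMeasurableSet
      measure_ball_lt_top.ne]
    rw [hvolball _ (by nlinarith), hvolball _ (by nlinarith)]
    rw [← ENNReal.ofReal_sub _ (by positivity)]
    apply ENNReal.ofReal_le_ofReal
    rw [hqs, hq]
    nlinarith [Real.pi_pos, sq_nonneg ((1/2:ℝ)^n),
      mul_nonneg Real.pi_pos.le (sq_nonneg ((1/2:ℝ)^n)),
      pow_nonneg (by norm_num : (0:ℝ) ≤ 1/2) n]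
  -- bound on each annulus
  set a : ℝ := q ^ B with ha
  have ha0 : 0 < a := Real.rpow_pos_of_pos hq0 B
  have ha1 : a < 1 := Real.rpow_lt_one hq0.le hq1 hB
  have hbnd : ∀ n, ∫⁻ z in S n, ENNReal.ofReal ((1 - ‖z‖) ^ (B - 1))
      ≤ ENNReal.ofReal (2 * Real.pi * a ^ n) := by
    intro n
    have hqn0 : (0:ℝ) < q ^ n := by positivity
    have hqn10 : (0:ℝ) < q ^ (n+1) := by positivity
    have hc : ∀ z ∈ S n, ENNReal.ofReal ((1 - ‖z‖) ^ (B - 1))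
        ≤ ENNReal.ofReal ((q^n) ^ B / q ^ (n+1)) := by
      intro z hz
      obtain ⟨h1, h2⟩ := hz
      have h1z : 0 < 1 - ‖z‖ := by linarith
      have h1zq : 1 - ‖z‖ ≤ q ^ n := by linarith
      have h2z : q ^ (n+1) < 1 - ‖z‖ := by linarith
      apply ENNReal.ofReal_le_ofReal
      rw [Real.rpow_sub h1z, Real.rpow_one]
      apply div_le_div₀ (Real.rpow_nonneg hqn0.le B)
        (Real.rpow_le_rpow h1z.le h1zq hB.le) hqn10 h2z.le
    calc ∫⁻ z in S n, ENNReal.ofReal ((1 - ‖z‖) ^ (B - 1))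
        ≤ ∫⁻ _ in S n, ENNReal.ofReal ((q^n) ^ B / q ^ (n+1)) := by
          refine lintegral_mono_ae ((ae_restrict_iff' (hSmeas n)).2 (ae_of_all _ hc))
    _ = ENNReal.ofReal ((q^n) ^ B / q ^ (n+1)) * volume (S n) := setLIntegral_const _ _
    _ ≤ ENNReal.ofReal ((q^n) ^ B / q ^ (n+1)) * ENNReal.ofReal (Real.pi * q ^ n) := by
          gcongr
          exact hvol n
    _ = ENNReal.ofReal (((q^n) ^ B / q ^ (n+1)) * (Real.pi * q ^ n)) := by
          rw [← ENNReal.ofReal_mul (by positivity)]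
    _ = ENNReal.ofReal (2 * Real.pi * a ^ n) := by
          congr 1
          have e1 : ((q:ℝ)^n) ^ B = a ^ n := by
            rw [← Real.rpow_natCast q n, ← Real.rpow_mul hq0.le, mul_comm,
              Real.rpow_mul hq0.le, ha, Real.rpow_natCast]
          rw [e1]
          have : (q:ℝ) ^ (n+1) = q^n * q := by ring
          rw [this]
          field_simp [hq]
          ring
  -- sum
  calc ∫⁻ z in unitDisc, ENNReal.ofReal ((1 - ‖z‖) ^ (B - 1)) ∂(volume : Measure ℂ)
      ≤ ∫⁻ z in ⋃ n, S n, ENNReal.ofReal ((1 - ‖z‖) ^ (B - 1)) ∂(volume : Measure ℂ) :=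
        lintegral_mono_set hcover
  _ ≤ ∑' n, ∫⁻ z in S n, ENNReal.ofReal ((1 - ‖z‖) ^ (B - 1)) ∂(volume : Measure ℂ) :=
        lintegral_iUnion_le _ _
  _ ≤ ∑' n, ENNReal.ofReal (2 * Real.pi * a ^ n) := ENNReal.tsum_le_tsum hbnd
  _ = ∑' n, ENNReal.ofReal (2 * Real.pi) * ENNReal.ofReal a ^ n := by
        congr 1
        funext n
        rw [← ENNReal.ofReal_pow ha0.le, ← ENNReal.ofReal_mul (by positivity)]
  _ = ENNReal.ofReal (2 * Real.pi) * (1 - ENNReal.ofReal a)⁻¹ := by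
        rw [ENNReal.tsum_mul_left, ENNReal.tsum_geometric]
  _ < ⊤ := by
        apply ENNReal.mul_lt_top ENNReal.ofReal_lt_top
        rw [ENNReal.inv_lt_top]
        rw [tsub_pos_iff_lt]
        exact ENNReal.ofReal_lt_one.2 ha1

end aux

/-- Lemma: for `0 < p ≤ 1` and `ω,ν ∈ 𝒟`, the weight `(ν̂/ω̂)^p ω̂/(1-|z|)` is regular:
`∫_r^1 ν̂(s)^p ω̂(s)^{1-p}/(1-s) ds ≍ ν̂(r)^p ω̂(r)^{1-p}`. -/
theorem statement16 (p : ℝ) (hp0 : 0 < p) (hp1 : p ≤ 1)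
    (ω ν : ℂ → ℝ) (hω : IsRadialWeight ω) (hν : IsRadialWeight ν)
    (hωpos : whatPos ω) (hνpos : whatPos ν) (hωD : InD ω) (hνD : InD ν) :
    IsRadialWeight (fun z =>
      (what ν (‖z‖) / what ω (‖z‖)) ^ p *
        (what ω (‖z‖) / (1 - ‖z‖))) ∧
    ∃ c C : ℝ, 0 < c ∧ 0 < C ∧ ∀ r ∈ Set.Ico (0 : ℝ) 1,
      ENNReal.ofReal (c * (what ν r ^ p * what ω r ^ (1 - p))) ≤
          (∫⁻ s in Set.Ioo r 1,
            ENNReal.ofReal (what ν s ^ p * what ω s ^ (1 - p) / (1 - s))) ∧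
        (∫⁻ s in Set.Ioo r 1,
            ENNReal.ofReal (what ν s ^ p * what ω s ^ (1 - p) / (1 - s))) ≤
          ENNReal.ofReal (C * (what ν r ^ p * what ω r ^ (1 - p))) := by
  obtain ⟨hω0, hωrad, hωint⟩ := hω
  obtain ⟨hν0, hνrad, hνint⟩ := hν
  obtain ⟨⟨Cωh, hCωh1, hCωh⟩, hωch⟩ := hωD
  obtain ⟨⟨Cνh, hCνh1, hCνh⟩, hνch⟩ := hνD
  obtain ⟨Bν, Cν, hBν, hCν, hUν⟩ := dcheck_pow_bound hν0 hνpos hνch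
  obtain ⟨Bω, Cω, hBω, hCω, hUω⟩ := dcheck_pow_bound hω0 hωpos hωch
  have hp1' : (0:ℝ) ≤ 1 - p := by linarith
  set B : ℝ := p * Bν + (1 - p) * Bω with hB
  have hB0 : 0 < B := by
    have h1 : 0 < p * Bν := mul_pos hp0 hBν
    have h2 : 0 ≤ (1 - p) * Bω := mul_nonneg hp1' hBω.le
    rw [hB]; linarith
  set CU : ℝ := Cν ^ p * Cω ^ (1 - p) with hCU
  have hCU0 : 0 < CU := mul_pos (Real.rpow_pos_of_pos hCν p) (Real.rpow_pos_of_pos hCω _)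
  set CL : ℝ := Cνh ^ p * Cωh ^ (1 - p) with hCL
  have hCL0 : 0 < CL :=
    mul_pos (Real.rpow_pos_of_pos (by linarith) p) (Real.rpow_pos_of_pos (by linarith) _)
  have hFnn : ∀ s : ℝ, 0 ≤ what ν s ^ p * what ω s ^ (1 - p) := fun s =>
    mul_nonneg (Real.rpow_nonneg (what_nonneg hν0 s) p)
      (Real.rpow_nonneg (what_nonneg hω0 s) _)
  -- Claim U : pointwise power-type decay from the Dcheck condition
  have claimU : ∀ r s : ℝ, 0 ≤ r → r ≤ s → s < 1 →
      what ν s ^ p * what ω s ^ (1 - p) ≤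
        CU * ((1 - s) / (1 - r)) ^ B * (what ν r ^ p * what ω r ^ (1 - p)) := by
    intro r s hr0 hrs hs1
    have hr1 : r < 1 := lt_of_le_of_lt hrs hs1
    have hy0 : (0:ℝ) < (1 - s) / (1 - r) := div_pos (by linarith) (by linarith)
    set y : ℝ := (1 - s) / (1 - r) with hy
    have h1 : what ν s ^ p ≤ (Cν * y ^ Bν * what ν r) ^ p :=
      Real.rpow_le_rpow (what_nonneg hν0 s) (hUν r s hr0 hrs hs1) hp0.le
    have h2 : what ω s ^ (1 - p) ≤ (Cω * y ^ Bω * what ω r) ^ (1 - p) :=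
      Real.rpow_le_rpow (what_nonneg hω0 s) (hUω r s hr0 hrs hs1) hp1'
    have e1 : (Cν * y ^ Bν * what ν r) ^ p = Cν ^ p * (y ^ Bν) ^ p * what ν r ^ p := by
      rw [Real.mul_rpow (mul_nonneg hCν.le (Real.rpow_nonneg hy0.le _)) (what_nonneg hν0 r),
        Real.mul_rpow hCν.le (Real.rpow_nonneg hy0.le _)]
    have e2 : (Cω * y ^ Bω * what ω r) ^ (1-p)
        = Cω ^ (1-p) * (y ^ Bω) ^ (1-p) * what ω r ^ (1-p) := by
      rw [Real.mul_rpow (mul_nonneg hCω.le (Real.rpow_nonneg hy0.le _)) (what_nonneg hω0 r),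
        Real.mul_rpow hCω.le (Real.rpow_nonneg hy0.le _)]
    have e3 : (y ^ Bν) ^ p * (y ^ Bω) ^ (1-p) = y ^ B := by
      rw [← Real.rpow_mul hy0.le, ← Real.rpow_mul hy0.le, ← Real.rpow_add hy0, hB]
      ring_nf
    calc what ν s ^ p * what ω s ^ (1 - p)
        ≤ (Cν * y ^ Bν * what ν r) ^ p * (Cω * y ^ Bω * what ω r) ^ (1 - p) :=
          mul_le_mul h1 h2 (Real.rpow_nonneg (what_nonneg hω0 s) _)
            (Real.rpow_nonneg
              (mul_nonneg (mul_nonneg hCν.le (Real.rpow_nonneg hy0.le _)) (what_nonneg hν0 r)) _)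
    _ = (Cν ^ p * Cω ^ (1-p)) * ((y ^ Bν) ^ p * (y ^ Bω) ^ (1-p))
          * (what ν r ^ p * what ω r ^ (1-p)) := by rw [e1, e2]; ring
    _ = CU * y ^ B * (what ν r ^ p * what ω r ^ (1 - p)) := by rw [e3, hCU]
  -- Claim L : from the Dhat condition
  have claimL : ∀ r ∈ Set.Ico (0:ℝ) 1, what ν r ^ p * what ω r ^ (1 - p) ≤
      CL * (what ν ((1 + r)/2) ^ p * what ω ((1 + r)/2) ^ (1 - p)) := by
    intro r hr
    have h1 : what ν r ^ p ≤ (Cνh * what ν ((1 + r)/2)) ^ p :=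
      Real.rpow_le_rpow (what_nonneg hν0 r) (hCνh r hr) hp0.le
    have h2 : what ω r ^ (1-p) ≤ (Cωh * what ω ((1 + r)/2)) ^ (1-p) :=
      Real.rpow_le_rpow (what_nonneg hω0 r) (hCωh r hr) hp1'
    have e1 : (Cνh * what ν ((1 + r)/2)) ^ p = Cνh ^ p * what ν ((1 + r)/2) ^ p :=
      Real.mul_rpow (by linarith) (what_nonneg hν0 _)
    have e2 : (Cωh * what ω ((1 + r)/2)) ^ (1-p) = Cωh ^ (1-p) * what ω ((1 + r)/2) ^ (1-p) :=
      Real.mul_rpow (by linarith) (what_nonneg hω0 _)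
    calc what ν r ^ p * what ω r ^ (1 - p)
        ≤ (Cνh * what ν ((1 + r)/2)) ^ p * (Cωh * what ω ((1 + r)/2)) ^ (1-p) :=
          mul_le_mul h1 h2 (Real.rpow_nonneg (what_nonneg hω0 r) _)
            (Real.rpow_nonneg (mul_nonneg (by linarith) (what_nonneg hν0 _)) _)
    _ = CL * (what ν ((1 + r)/2) ^ p * what ω ((1 + r)/2) ^ (1 - p)) := by
          rw [e1, e2, hCL]; ring
  -- F is antitone
  have hFanti : ∀ a b : ℝ, 0 ≤ a → a ≤ b →
      what ν b ^ p * what ω b ^ (1 - p) ≤ what ν a ^ p * what ω a ^ (1 - p) := fun a b ha hab =>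
    mul_le_mul
      (Real.rpow_le_rpow (what_nonneg hν0 b) (what_anti hν0 hνpos ha hab) hp0.le)
      (Real.rpow_le_rpow (what_nonneg hω0 b) (what_anti hω0 hωpos ha hab) hp1')
      (Real.rpow_nonneg (what_nonneg hω0 b) _)
      (Real.rpow_nonneg (what_nonneg hν0 a) _)
  -- equality of the two forms of the weight on [0,1)
  have hτeq : ∀ t : ℝ, 0 ≤ t → t < 1 →
      (what ν t / what ω t) ^ p * (what ω t / (1 - t)) =
        (what ν t ^ p * what ω t ^ (1 - p)) / (1 - t) := by
    intro t h0 h1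
    have hW := hωpos t ⟨h0, h1⟩
    have hV := what_nonneg hν0 t
    have h1t : (0:ℝ) < 1 - t := by linarith
    rw [Real.div_rpow hV hW.le, Real.rpow_sub hW, Real.rpow_one]
    have hWp : (0:ℝ) < what ω t ^ p := Real.rpow_pos_of_pos hW p
    field_simp
  constructor
  · -- the weight is a radial weight
    refine ⟨?_, ?_, ?_⟩
    · -- nonnegativity
      intro z
      by_cases hz : ‖z‖ < 1
      · have h1 : (0:ℝ) < 1 - ‖z‖ := by linarith
        exact mul_nonneg
          (Real.rpow_nonneg (div_nonneg (what_nonneg hν0 _) (what_nonneg hω0 _)) p)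
          (div_nonneg (what_nonneg hω0 _) h1.le)
      · push_neg at hz
        simp only [what_eq_zero (ω := ω) hz, zero_div, mul_zero, le_refl]
    · -- radiality
      intro z
      simp [Complex.norm_real, _root_.abs_of_nonneg (norm_nonneg z)]
    · -- integrability
      set M : ℝ := CU * (what ν 0 ^ p * what ω 0 ^ (1 - p)) with hMdef
      have hM0 : 0 ≤ M := mul_nonneg hCU0.le (hFnn 0)
      have hτle : ∀ z ∈ unitDisc,
          (what ν (‖z‖) / what ω (‖z‖)) ^ p *
            (what ω (‖z‖) / (1 - ‖z‖))
          ≤ M * (1 - ‖z‖) ^ (B - 1) := by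
        intro z hz
        have h0 : 0 ≤ ‖z‖ := norm_nonneg z
        have h1 : ‖z‖ < 1 := hz
        rw [hτeq _ h0 h1]
        have h2 := ptw_bound hB0 claimU (le_refl (0:ℝ)) h0 h1
        rw [sub_zero, Real.one_rpow, div_one] at h2
        exact h2
      have hτnn : ∀ z ∈ unitDisc, 0 ≤
          (what ν (‖z‖) / what ω (‖z‖)) ^ p *
            (what ω (‖z‖) / (1 - ‖z‖)) := by
        intro z hz
        have h1 : (0:ℝ) < 1 - ‖z‖ := by
          have : ‖z‖ < 1 := hz
          linarith
        exact mul_nonneg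
          (Real.rpow_nonneg (div_nonneg (what_nonneg hν0 _) (what_nonneg hω0 _)) p)
          (div_nonneg (what_nonneg hω0 _) h1.le)
      have hDmeas : MeasurableSet unitDisc :=
        (isOpen_lt continuous_norm continuous_const).measurableSet
      have hmeas : Measurable (fun z : ℂ =>
          (what ν (‖z‖) / what ω (‖z‖)) ^ p *
            (what ω (‖z‖) / (1 - ‖z‖))) := by
        have hA : Measurable (fun z : ℂ => ‖z‖) := continuous_norm.measurable
        have hWν : Measurable (fun z : ℂ => what ν (‖z‖)) := by
          have h2 : (fun z : ℂ => what ν (‖z‖))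
              = fun z : ℂ => what ν (max (‖z‖) 0) := by
            funext z; rw [max_eq_left (norm_nonneg z)]
          rw [h2]
          exact (what_max_measurable hν0 hνpos).comp hA
        have hWω : Measurable (fun z : ℂ => what ω (‖z‖)) := by
          have h2 : (fun z : ℂ => what ω (‖z‖))
              = fun z : ℂ => what ω (max (‖z‖) 0) := by
            funext z; rw [max_eq_left (norm_nonneg z)]
          rw [h2]
          exact (what_max_measurable hω0 hωpos).comp hA
        fun_prop
      have hintvol : IntegrableOn (fun z : ℂ =>
          (what ν (‖z‖) / what ω (‖z‖)) ^ p *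
            (what ω (‖z‖) / (1 - ‖z‖))) unitDisc volume := by
        constructor
        · exact hmeas.aestronglyMeasurable
        · rw [HasFiniteIntegral]
          have hb : ∫⁻ z in unitDisc, ‖(what ν (‖z‖) / what ω (‖z‖)) ^ p *
                (what ω (‖z‖) / (1 - ‖z‖))‖ₑ ∂volume
              ≤ ∫⁻ z in unitDisc, ENNReal.ofReal (M * (1 - ‖z‖) ^ (B - 1)) ∂volume := by
            refine lintegral_mono_ae ((ae_restrict_iff' hDmeas).2 (ae_of_all _ ?_))
            intro z hz
            rw [Real.enorm_eq_ofReal (hτnn z hz)]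
            exact ENNReal.ofReal_le_ofReal (hτle z hz)
          refine lt_of_le_of_lt hb ?_
          have he : ∀ z : ℂ, ENNReal.ofReal (M * (1 - ‖z‖) ^ (B - 1))
              = ENNReal.ofReal M * ENNReal.ofReal ((1 - ‖z‖) ^ (B - 1)) := fun z =>
            ENNReal.ofReal_mul hM0
          simp only [he]
          rw [lintegral_const_mul' _ _ ENNReal.ofReal_ne_top]
          exact ENNReal.mul_lt_top ENNReal.ofReal_lt_top (lintegral_one_sub_abs_rpow hB0)
      rw [IntegrableOn, dA, Measure.restrict_smul]
      refine hintvol.smul_measure ?_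
      rw [ENNReal.inv_ne_top]
      exact (ENNReal.ofReal_pos.2 Real.pi_pos).ne'
  · -- the two-sided estimate
    refine ⟨1/(2*CL), CU/B, by positivity, by positivity, ?_⟩
    intro r hr
    obtain ⟨hr0, hr1⟩ := hr
    constructor
    · exact lower_est hCL0 hFnn hFanti claimL hr0 hr1
    · exact upper_est hB0 hCU0 hFnn claimU hr0 hr1
end

section
/- Let ν∈𝒟. Then there is a constant C>0, depending only on ν, such that ∫_r^1 log(e/(1−t)) · ν̂(t)/(1−t) dt ≤ C·ν̂(r)·log(e/(1−r)) for all 0≤r<1; moreover, for every radial weight ν one has ∫_r^1 log(e/(1−t)) ν(t) dt ≥ ν̂(r)·log(e/(1−r)) for all 0≤r<1. Consequently, for ν∈𝒟, ∫_r^1 log(e/(1−t)) ν̂(t)/(1−t) dt ≤ C·∫_r^1 log(e/(1−t)) ν(t) dt for all 0≤r<1. -/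
open MeasureTheory Complex Set
open scoped ENNReal

-- log(e/(1-t)) ≥ 1 for t ∈ [0,1)
lemma aux_log_ge_one {t : ℝ} (h0 : 0 ≤ t) (h1 : t < 1) :
    1 ≤ Real.log (Real.exp 1 / (1 - t)) := by
  have h : Real.exp 1 ≤ Real.exp 1 / (1 - t) := by
    rw [le_div_iff₀ (by linarith)]
    nlinarith [Real.exp_pos 1]
  calc (1:ℝ) = Real.log (Real.exp 1) := (Real.log_exp 1).symm
    _ ≤ _ := Real.log_le_log (Real.exp_pos 1) h

lemma aux_log_mono {r t : ℝ} (hrt : r ≤ t) (ht : t < 1) :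
    Real.log (Real.exp 1 / (1 - r)) ≤ Real.log (Real.exp 1 / (1 - t)) := by
  apply Real.log_le_log (div_pos (Real.exp_pos 1) (by linarith))
  rw [div_le_div_iff₀ (by linarith) (by linarith)]
  nlinarith [Real.exp_pos 1]

-- log y ≤ (1/c) y^c  for y ≥ 1, c > 0
lemma aux_log_le_rpow {y c : ℝ} (hy : 1 ≤ y) (hc : 0 < c) :
    Real.log y ≤ (1 / c) * y ^ c := by
  have hy0 : 0 < y := by linarith
  have h1 : Real.log y = (1 / c) * Real.log (y ^ c) := by
    rw [Real.log_rpow hy0]; field_simp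
  rw [h1]
  exact mul_le_mul_of_nonneg_left (Real.log_le_self (Real.rpow_nonneg hy0.le c))
    (by positivity)

-- ∫⁻_{(r,1)} (1-t)^(c-1) ≤ (1-r)^c / c
lemma tail_rpow_lintegral {r c : ℝ} (hr : r < 1) (hc : 0 < c) :
    (∫⁻ t in Set.Ioo r 1, ENNReal.ofReal ((1 - t) ^ (c - 1))) ≤
      ENNReal.ofReal ((1 - r) ^ c / c) := by
  have hii : IntervalIntegrable (fun x : ℝ => x ^ (c - 1)) volume 0 (1 - r) :=
    intervalIntegral.intervalIntegrable_rpow' (by linarith)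
  have hii2 : IntervalIntegrable (fun t : ℝ => (1 - t) ^ (c - 1)) volume r 1 := by
    have := hii.comp_sub_left 1
    simpa using this.symm
  have hint : IntegrableOn (fun t : ℝ => (1 - t) ^ (c - 1)) (Set.Ioo r 1) volume :=
    (intervalIntegrable_iff_integrableOn_Ioo_of_le hr.le).mp hii2
  have hnn : 0 ≤ᵐ[volume.restrict (Set.Ioo r 1)] fun t : ℝ => (1 - t) ^ (c - 1) := by
    filter_upwards [ae_restrict_mem measurableSet_Ioo] with t ht
    exact Real.rpow_nonneg (by linarith [ht.2]) _
  rw [← ofReal_integral_eq_lintegral_ofReal hint hnn]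
  apply ENNReal.ofReal_le_ofReal
  have h1 : (∫ t in Set.Ioo r 1, (1 - t) ^ (c - 1)) = ∫ t in r..1, (1 - t) ^ (c - 1) := by
    rw [intervalIntegral.integral_of_le hr.le, integral_Ioc_eq_integral_Ioo]
  rw [h1, intervalIntegral.integral_comp_sub_left (fun x => x ^ (c - 1)) 1]
  simp only [sub_self, sub_zero]
  rw [integral_rpow (Or.inl (by linarith)), sub_add_cancel,
    Real.zero_rpow hc.ne', sub_zero]

-- rpow identity
lemma aux_rpow_id {a b : ℝ} (ha : 0 < a) (hb : 0 < b) (x y : ℝ) :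
    (b / a) ^ x * (a / b) ^ y / a = b ^ (x - y) * a ^ (y - x - 1) := by
  rw [Real.div_rpow hb.le ha.le, Real.div_rpow ha.le hb.le,
    Real.rpow_sub hb, Real.rpow_sub ha, Real.rpow_sub ha, Real.rpow_one]
  have h1 : (a : ℝ) ^ x ≠ 0 := (Real.rpow_pos_of_pos ha x).ne'
  have h2 : (a : ℝ) ^ y ≠ 0 := (Real.rpow_pos_of_pos ha y).ne'
  have h3 : (b : ℝ) ^ x ≠ 0 := (Real.rpow_pos_of_pos hb x).ne'
  have h4 : (b : ℝ) ^ y ≠ 0 := (Real.rpow_pos_of_pos hb y).ne'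
  field_simp

section Iter
variable {g : ℝ → ℝ} {K C : ℝ}

-- iteration of the Dcheck condition
lemma aux_iter (hK : 1 < K) (hC : 1 < C)
    (hch : ∀ r ∈ Set.Ico (0 : ℝ) 1, C * g (1 - (1 - r) / K) ≤ g r) :
    ∀ n : ℕ, ∀ r ∈ Set.Ico (0 : ℝ) 1, C ^ n * g (1 - (1 - r) / K ^ n) ≤ g r := by
  intro n
  induction n with
  | zero => intro r hr; simp
  | succ n ih =>
    intro r hr
    obtain ⟨hr0, hr1⟩ := hr
    have hKn : (1 : ℝ) ≤ K ^ n := one_le_pow₀ hK.le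
    have hKn0 : (0 : ℝ) < K ^ n := by positivity
    have hr' : 1 - (1 - r) / K ^ n ∈ Set.Ico (0 : ℝ) 1 := by
      constructor
      · have : (1 - r) / K ^ n ≤ 1 - r := by
          rw [div_le_iff₀ hKn0]; nlinarith
        linarith
      · have : 0 < (1 - r) / K ^ n := div_pos (by linarith) hKn0
        linarith
    have key := hch _ hr'
    have harg : 1 - (1 - (1 - (1 - r) / K ^ n)) / K = 1 - (1 - r) / K ^ (n + 1) := by
      field_simp
      ring
    rw [harg] at key
    have ihr := ih r ⟨hr0, hr1⟩
    calc C ^ (n + 1) * g (1 - (1 - r) / K ^ (n + 1))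
        = C ^ n * (C * g (1 - (1 - r) / K ^ (n + 1))) := by ring
      _ ≤ C ^ n * g (1 - (1 - r) / K ^ n) :=
          mul_le_mul_of_nonneg_left key (by positivity)
      _ ≤ g r := ihr

-- the comparison lemma
lemma aux_compare (hK : 1 < K) (hC : 1 < C)
    (hch : ∀ r ∈ Set.Ico (0 : ℝ) 1, C * g (1 - (1 - r) / K) ≤ g r)
    (hmono : ∀ a b : ℝ, 0 ≤ a → a ≤ b → b < 1 → g b ≤ g a)
    (hnn : ∀ r ∈ Set.Ico (0 : ℝ) 1, 0 ≤ g r) :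
    ∀ r t : ℝ, 0 ≤ r → r ≤ t → t < 1 →
      g t ≤ C * ((1 - t) / (1 - r)) ^ (Real.log C / Real.log K) * g r := by
  intro r t hr0 hrt ht1
  set β : ℝ := Real.log C / Real.log K with hβdef
  have hlogK : 0 < Real.log K := Real.log_pos hK
  have hlogC : 0 < Real.log C := Real.log_pos hC
  have hβ : 0 < β := div_pos hlogC hlogK
  have ha : 0 < 1 - t := by linarith
  have hb : 0 < 1 - r := by linarith
  set x : ℝ := (1 - r) / (1 - t) with hxdef
  have hx1 : 1 ≤ x := (one_le_div ha).mpr (by linarith)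
  have hx0 : 0 < x := by linarith
  set n : ℕ := ⌊Real.logb K x⌋₊ with hndef
  have hlb0 : 0 ≤ Real.logb K x := Real.logb_nonneg hK hx1
  have hK0 : 0 < K := by linarith
  -- K ^ n ≤ x
  have hKn : (K : ℝ) ^ n ≤ x := by
    calc (K : ℝ) ^ n = K ^ (n : ℝ) := (Real.rpow_natCast K n).symm
      _ ≤ K ^ Real.logb K x :=
          Real.rpow_le_rpow_of_exponent_le hK.le (Nat.floor_le hlb0)
      _ = x := Real.rpow_logb hK0 hK.ne' hx0
  -- x ≤ K ^ (n+1)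
  have hxK : x ≤ (K : ℝ) ^ (n + 1) := by
    calc x = K ^ Real.logb K x := (Real.rpow_logb hK0 hK.ne' hx0).symm
      _ ≤ K ^ ((n : ℝ) + 1) :=
          Real.rpow_le_rpow_of_exponent_le hK.le (Nat.lt_floor_add_one _).le
      _ = K ^ (n + 1) := by
          rw [← Real.rpow_natCast K (n + 1)]; push_cast; ring_nf
  -- t ≥ 1 - (1-r)/K^n
  have hKn0 : (0 : ℝ) < K ^ n := by positivity
  have htge : 1 - (1 - r) / K ^ n ≤ t := by
    have h1 : (1 - t) * K ^ n ≤ 1 - r := by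
      rw [hxdef] at hKn
      calc (1 - t) * K ^ n ≤ (1 - t) * ((1 - r) / (1 - t)) := by
            exact mul_le_mul_of_nonneg_left hKn ha.le
        _ = 1 - r := by field_simp
    have : 1 - t ≤ (1 - r) / K ^ n := (le_div_iff₀ hKn0).mpr h1
    linarith
  have harg0 : 0 ≤ 1 - (1 - r) / K ^ n := by
    have hKn1 : (1 : ℝ) ≤ K ^ n := one_le_pow₀ hK.le
    have : (1 - r) / K ^ n ≤ 1 - r := by
      rw [div_le_iff₀ hKn0]; nlinarith
    linarith
  have h1 : g t ≤ g (1 - (1 - r) / K ^ n) := hmono _ t harg0 htge ht1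
  have h2 := aux_iter hK hC hch n r ⟨hr0, by linarith⟩
  have hCn0 : (0 : ℝ) < C ^ n := by positivity
  have h3 : g t ≤ g r / C ^ n := by
    rw [le_div_iff₀ hCn0]
    calc g t * C ^ n = C ^ n * g t := by ring
      _ ≤ C ^ n * g (1 - (1 - r) / K ^ n) :=
          mul_le_mul_of_nonneg_left h1 hCn0.le
      _ ≤ g r := h2
  -- x^β ≤ C^(n+1)
  have hKβ : (K : ℝ) ^ β = C := by
    rw [Real.rpow_def_of_pos hK0, hβdef, mul_div_cancel₀ _ hlogK.ne', Real.exp_log (by linarith)]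
  have hxβ : x ^ β ≤ C ^ (n + 1) := by
    calc x ^ β ≤ ((K : ℝ) ^ (n + 1)) ^ β :=
          Real.rpow_le_rpow hx0.le hxK hβ.le
      _ = ((K : ℝ) ^ β) ^ (n + 1) := by
          rw [← Real.rpow_natCast K (n + 1), ← Real.rpow_natCast (K ^ β) (n + 1),
            ← Real.rpow_mul hK0.le, ← Real.rpow_mul hK0.le, mul_comm]
      _ = C ^ (n + 1) := by rw [hKβ]
  have hxβ0 : 0 < x ^ β := Real.rpow_pos_of_pos hx0 β
  -- 1/C^n ≤ C / x^β
  have h4 : (C ^ n : ℝ)⁻¹ ≤ C / x ^ β := by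
    rw [← one_div, div_le_div_iff₀ hCn0 hxβ0]
    calc 1 * x ^ β = x ^ β := one_mul _
      _ ≤ C ^ (n + 1) := hxβ
      _ = C * C ^ n := by ring
  have h5 : ((1 - t) / (1 - r)) ^ β = (x ^ β)⁻¹ := by
    rw [show (1 - t) / (1 - r) = x⁻¹ by rw [hxdef, inv_div], Real.inv_rpow hx0.le]
  have hgr : 0 ≤ g r := hnn r ⟨hr0, by linarith⟩
  calc g t ≤ g r / C ^ n := h3
    _ = g r * (C ^ n)⁻¹ := div_eq_mul_inv _ _
    _ ≤ g r * (C / x ^ β) := mul_le_mul_of_nonneg_left h4 hgr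
    _ = C * ((1 - t) / (1 - r)) ^ β * g r := by rw [h5]; ring

end Iter

-- Part 2 core
lemma aux_part2 (f : ℝ → ℝ) (hf : ∀ s, 0 ≤ f s) (r : ℝ) (hr0 : 0 ≤ r) (hr1 : r < 1) :
    ENNReal.ofReal ((∫ s in Set.Ioo r 1, f s) * Real.log (Real.exp 1 / (1 - r))) ≤
      ∫⁻ t in Set.Ioo r 1, ENNReal.ofReal (Real.log (Real.exp 1 / (1 - t)) * f t) := by
  by_cases hfi : IntegrableOn f (Set.Ioo r 1) volume
  · have hLr : (0:ℝ) ≤ Real.log (Real.exp 1 / (1 - r)) :=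
      le_trans zero_le_one (aux_log_ge_one hr0 hr1)
    calc ENNReal.ofReal ((∫ s in Set.Ioo r 1, f s) * Real.log (Real.exp 1 / (1 - r)))
        = ENNReal.ofReal (Real.log (Real.exp 1 / (1 - r))) *
            ENNReal.ofReal (∫ s in Set.Ioo r 1, f s) := by
          rw [← ENNReal.ofReal_mul hLr, mul_comm]
      _ = ENNReal.ofReal (Real.log (Real.exp 1 / (1 - r))) *
            ∫⁻ t in Set.Ioo r 1, ENNReal.ofReal (f t) := by
          rw [ofReal_integral_eq_lintegral_ofReal hfi
            (Filter.Eventually.of_forall hf)]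
      _ = ∫⁻ t in Set.Ioo r 1, ENNReal.ofReal (Real.log (Real.exp 1 / (1 - r))) *
            ENNReal.ofReal (f t) :=
          (lintegral_const_mul' _ _ ENNReal.ofReal_ne_top).symm
      _ ≤ ∫⁻ t in Set.Ioo r 1, ENNReal.ofReal (Real.log (Real.exp 1 / (1 - t)) * f t) := by
          apply setLIntegral_mono' measurableSet_Ioo
          intro t ht
          rw [← ENNReal.ofReal_mul hLr]
          exact ENNReal.ofReal_le_ofReal
            (mul_le_mul_of_nonneg_right (aux_log_mono ht.1.le ht.2) (hf t))
  · rw [show (∫ s in Set.Ioo r 1, f s) = 0 from integral_undef hfi]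
    simp

-- Part 1 core
lemma aux_part1 {g : ℝ → ℝ} {Cv β : ℝ} (hCv : 0 < Cv) (hβ : 0 < β)
    (hcomp : ∀ r t : ℝ, 0 ≤ r → r ≤ t → t < 1 →
      g t ≤ Cv * ((1 - t) / (1 - r)) ^ β * g r)
    (hnn : ∀ r : ℝ, 0 ≤ r → r < 1 → 0 ≤ g r)
    {r : ℝ} (hr0 : 0 ≤ r) (hr1 : r < 1) :
    (∫⁻ t in Set.Ioo r 1,
        ENNReal.ofReal (Real.log (Real.exp 1 / (1 - t)) * (g t / (1 - t)))) ≤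
      ENNReal.ofReal ((Cv / β + 4 * Cv / β ^ 2) *
        (g r * Real.log (Real.exp 1 / (1 - r)))) := by
  have hb : (0:ℝ) < 1 - r := by linarith
  have hgr : 0 ≤ g r := hnn r hr0 hr1
  have hLr1 : (1:ℝ) ≤ Real.log (Real.exp 1 / (1 - r)) := aux_log_ge_one hr0 hr1
  set Lr : ℝ := Real.log (Real.exp 1 / (1 - r)) with hLrdef
  set A : ℝ := Cv * g r * Lr * (1 - r) ^ (-β) with hAdef
  set B : ℝ := Cv * g r * (2 / β) * (1 - r) ^ (-(β / 2)) with hBdef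
  have hA : 0 ≤ A := by
    apply mul_nonneg (mul_nonneg (mul_nonneg hCv.le hgr) (by linarith))
      (Real.rpow_nonneg hb.le _)
  have hB : 0 ≤ B := by
    apply mul_nonneg (mul_nonneg (mul_nonneg hCv.le hgr) (by positivity))
      (Real.rpow_nonneg hb.le _)
  -- pointwise bound
  have hpt : ∀ t ∈ Set.Ioo r 1,
      ENNReal.ofReal (Real.log (Real.exp 1 / (1 - t)) * (g t / (1 - t))) ≤
        ENNReal.ofReal (A * (1 - t) ^ (β - 1)) +
          ENNReal.ofReal (B * (1 - t) ^ (β / 2 - 1)) := by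
    intro t ht
    have ha : (0:ℝ) < 1 - t := by linarith [ht.2]
    have hab : (1:ℝ) - t ≤ 1 - r := by linarith [ht.1]
    have ht0 : 0 ≤ t := le_trans hr0 ht.1.le
    have h1 := hcomp r t hr0 ht.1.le ht.2
    -- log split
    have harg : Real.exp 1 / (1 - t) =
        (Real.exp 1 / (1 - r)) * ((1 - r) / (1 - t)) := by
      field_simp
    have hyge : (1:ℝ) ≤ (1 - r) / (1 - t) := (one_le_div ha).mpr hab
    have h2 : Real.log (Real.exp 1 / (1 - t)) ≤
        Lr + (2 / β) * ((1 - r) / (1 - t)) ^ (β / 2) := by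
      rw [harg, Real.log_mul (by positivity) (by positivity)]
      have := aux_log_le_rpow hyge (by positivity : (0:ℝ) < β / 2)
      have h22 : (1:ℝ) / (β / 2) = 2 / β := by
        field_simp
      rw [h22] at this
      simp only [hLrdef]
      linarith
    have hgt0 : 0 ≤ g t / (1 - t) := div_nonneg (hnn t ht0 ht.2) ha.le
    have hstep : Real.log (Real.exp 1 / (1 - t)) * (g t / (1 - t)) ≤
        (Lr + (2 / β) * ((1 - r) / (1 - t)) ^ (β / 2)) *
          (Cv * ((1 - t) / (1 - r)) ^ β * g r / (1 - t)) := by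
      apply mul_le_mul h2 _ hgt0 _
      · gcongr
      · have : (0:ℝ) ≤ (2 / β) * ((1 - r) / (1 - t)) ^ (β / 2) := by
          apply mul_nonneg (by positivity) (Real.rpow_nonneg (by positivity) _)
        linarith
    have e1 : ((1 - t) / (1 - r)) ^ β / (1 - t) =
        (1 - r) ^ (-β) * (1 - t) ^ (β - 1) := by
      have := aux_rpow_id ha hb 0 β
      simpa [Real.rpow_zero, zero_sub, sub_zero] using this
    have e2 : ((1 - r) / (1 - t)) ^ (β / 2) * ((1 - t) / (1 - r)) ^ β / (1 - t) =
        (1 - r) ^ (-(β / 2)) * (1 - t) ^ (β / 2 - 1) := by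
      have := aux_rpow_id ha hb (β / 2) β
      rw [show β / 2 - β = -(β / 2) by ring, show β - β / 2 - 1 = β / 2 - 1 by ring] at this
      exact this
    have heq : (Lr + (2 / β) * ((1 - r) / (1 - t)) ^ (β / 2)) *
          (Cv * ((1 - t) / (1 - r)) ^ β * g r / (1 - t)) =
        A * (1 - t) ^ (β - 1) + B * (1 - t) ^ (β / 2 - 1) := by
      calc (Lr + (2 / β) * ((1 - r) / (1 - t)) ^ (β / 2)) *
            (Cv * ((1 - t) / (1 - r)) ^ β * g r / (1 - t))
          = Cv * g r * Lr * (((1 - t) / (1 - r)) ^ β / (1 - t)) +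
              Cv * g r * (2 / β) *
                (((1 - r) / (1 - t)) ^ (β / 2) * ((1 - t) / (1 - r)) ^ β / (1 - t)) := by
            ring
        _ = A * (1 - t) ^ (β - 1) + B * (1 - t) ^ (β / 2 - 1) := by
            rw [e1, e2, hAdef, hBdef]; ring
    have hX : 0 ≤ A * (1 - t) ^ (β - 1) :=
      mul_nonneg hA (Real.rpow_nonneg ha.le _)
    have hY : 0 ≤ B * (1 - t) ^ (β / 2 - 1) :=
      mul_nonneg hB (Real.rpow_nonneg ha.le _)
    calc ENNReal.ofReal (Real.log (Real.exp 1 / (1 - t)) * (g t / (1 - t)))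
        ≤ ENNReal.ofReal (A * (1 - t) ^ (β - 1) + B * (1 - t) ^ (β / 2 - 1)) :=
          ENNReal.ofReal_le_ofReal (by rw [← heq]; exact hstep)
      _ = _ := ENNReal.ofReal_add hX hY
  -- integrate
  have hmeas : Measurable fun t : ℝ => ENNReal.ofReal (A * (1 - t) ^ (β - 1)) := by
    fun_prop
  calc (∫⁻ t in Set.Ioo r 1,
        ENNReal.ofReal (Real.log (Real.exp 1 / (1 - t)) * (g t / (1 - t))))
      ≤ ∫⁻ t in Set.Ioo r 1, (ENNReal.ofReal (A * (1 - t) ^ (β - 1)) +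
          ENNReal.ofReal (B * (1 - t) ^ (β / 2 - 1))) :=
        setLIntegral_mono' measurableSet_Ioo hpt
    _ = (∫⁻ t in Set.Ioo r 1, ENNReal.ofReal (A * (1 - t) ^ (β - 1))) +
          ∫⁻ t in Set.Ioo r 1, ENNReal.ofReal (B * (1 - t) ^ (β / 2 - 1)) :=
        lintegral_add_left hmeas _
    _ ≤ ENNReal.ofReal A * ENNReal.ofReal ((1 - r) ^ β / β) +
          ENNReal.ofReal B * ENNReal.ofReal ((1 - r) ^ (β / 2) / (β / 2)) := by
        apply add_le_add
        · calc (∫⁻ t in Set.Ioo r 1, ENNReal.ofReal (A * (1 - t) ^ (β - 1)))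
              = ENNReal.ofReal A * ∫⁻ t in Set.Ioo r 1,
                  ENNReal.ofReal ((1 - t) ^ (β - 1)) := by
                simp_rw [ENNReal.ofReal_mul hA]
                exact lintegral_const_mul' _ _ ENNReal.ofReal_ne_top
            _ ≤ _ := mul_le_mul_right (tail_rpow_lintegral hr1 hβ) _
        · calc (∫⁻ t in Set.Ioo r 1, ENNReal.ofReal (B * (1 - t) ^ (β / 2 - 1)))
              = ENNReal.ofReal B * ∫⁻ t in Set.Ioo r 1,
                  ENNReal.ofReal ((1 - t) ^ (β / 2 - 1)) := by
                simp_rw [ENNReal.ofReal_mul hB]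
                exact lintegral_const_mul' _ _ ENNReal.ofReal_ne_top
            _ ≤ _ := mul_le_mul_right (tail_rpow_lintegral hr1 (by positivity)) _
    _ = ENNReal.ofReal (A * ((1 - r) ^ β / β) + B * ((1 - r) ^ (β / 2) / (β / 2))) := by
        rw [← ENNReal.ofReal_mul hA, ← ENNReal.ofReal_mul hB,
          ENNReal.ofReal_add (mul_nonneg hA (by positivity))
            (mul_nonneg hB (by positivity))]
    _ ≤ ENNReal.ofReal ((Cv / β + 4 * Cv / β ^ 2) * (g r * Lr)) := by
        apply ENNReal.ofReal_le_ofReal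
        have c1 : ((1:ℝ) - r) ^ (-β) * (1 - r) ^ β = 1 := by
          rw [← Real.rpow_add hb]; simp
        have c2 : ((1:ℝ) - r) ^ (-(β / 2)) * (1 - r) ^ (β / 2) = 1 := by
          rw [← Real.rpow_add hb]; simp
        have e3 : A * ((1 - r) ^ β / β) = Cv * g r * Lr / β := by
          rw [hAdef]
          calc Cv * g r * Lr * (1 - r) ^ (-β) * ((1 - r) ^ β / β)
              = Cv * g r * Lr / β * ((1 - r) ^ (-β) * (1 - r) ^ β) := by ring
            _ = Cv * g r * Lr / β := by rw [c1, mul_one]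
        have e4 : B * ((1 - r) ^ (β / 2) / (β / 2)) = Cv * g r * (4 / β ^ 2) := by
          rw [hBdef]
          calc Cv * g r * (2 / β) * (1 - r) ^ (-(β / 2)) * ((1 - r) ^ (β / 2) / (β / 2))
              = Cv * g r * ((2 / β) / (β / 2)) * ((1 - r) ^ (-(β / 2)) * (1 - r) ^ (β / 2)) := by
                ring
            _ = Cv * g r * ((2 / β) / (β / 2)) := by rw [c2, mul_one]
            _ = Cv * g r * (4 / β ^ 2) := by
                congr 1
                field_simp
                ring
        rw [e3, e4]
        have hE : (0:ℝ) ≤ 4 * Cv / β ^ 2 := by positivity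
        have hkey : 0 ≤ (4 * Cv / β ^ 2) * g r * (Lr - 1) :=
          mul_nonneg (mul_nonneg hE hgr) (by linarith)
        have expand : (Cv / β + 4 * Cv / β ^ 2) * (g r * Lr) =
            Cv * g r * Lr / β + (4 * Cv / β ^ 2) * g r * Lr := by ring
        rw [expand]
        have hid2 : Cv * g r * (4 / β ^ 2) = 4 * Cv / β ^ 2 * g r := by ring
        linarith [hkey, hid2.le, hid2.ge]

/-- Logarithmic tail estimates for weights in `𝒟`. -/
theorem statement19 (ν : ℂ → ℝ) (hν : IsRadialWeight ν) (hνpos : whatPos ν)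
    (hνD : InD ν) :
    -- `∫_r^1 log(e/(1-t)) ν̂(t)/(1-t) dt ≤ C ν̂(r) log(e/(1-r))`
    (∃ C : ℝ, 0 < C ∧ ∀ r ∈ Set.Ico (0 : ℝ) 1,
      (∫⁻ t in Set.Ioo r 1,
          ENNReal.ofReal (Real.log (Real.exp 1 / (1 - t)) * (what ν t / (1 - t)))) ≤
        ENNReal.ofReal (C * (what ν r * Real.log (Real.exp 1 / (1 - r))))) ∧
    -- for every radial weight: `∫_r^1 log(e/(1-t)) ν'(t) dt ≥ ν̂'(r) log(e/(1-r))`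
    (∀ ν' : ℂ → ℝ, IsRadialWeight ν' → ∀ r ∈ Set.Ico (0 : ℝ) 1,
      ENNReal.ofReal (what ν' r * Real.log (Real.exp 1 / (1 - r))) ≤
        ∫⁻ t in Set.Ioo r 1,
          ENNReal.ofReal (Real.log (Real.exp 1 / (1 - t)) * ν' ((t : ℝ) : ℂ))) ∧
    -- consequently
    (∃ C : ℝ, 0 < C ∧ ∀ r ∈ Set.Ico (0 : ℝ) 1,
      (∫⁻ t in Set.Ioo r 1,
          ENNReal.ofReal (Real.log (Real.exp 1 / (1 - t)) * (what ν t / (1 - t)))) ≤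
        ENNReal.ofReal C *
          ∫⁻ t in Set.Ioo r 1,
            ENNReal.ofReal (Real.log (Real.exp 1 / (1 - t)) * ν ((t : ℝ) : ℂ))) := by
  obtain ⟨K, Cv, hK, hCv, hch⟩ := hνD.2
  set β : ℝ := Real.log Cv / Real.log K with hβdef
  have hβ : 0 < β := div_pos (Real.log_pos hCv) (Real.log_pos hK)
  have hslice : ∀ r : ℝ, 0 ≤ r → r < 1 →
      IntegrableOn (fun s : ℝ => ν ((s : ℝ) : ℂ)) (Set.Ioo r 1) volume := by
    intro r h0 h1
    by_contra h
    have hpos := hνpos r ⟨h0, h1⟩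
    simp only [what] at hpos
    rw [integral_undef h] at hpos
    exact lt_irrefl 0 hpos
  have hwnn : ∀ r : ℝ, 0 ≤ r → r < 1 → 0 ≤ what ν r := fun r _ _ =>
    integral_nonneg fun s => hν.1 _
  have hmono : ∀ a b : ℝ, 0 ≤ a → a ≤ b → b < 1 → what ν b ≤ what ν a := by
    intro a b h0 hab hb1
    simp only [what]
    exact setIntegral_mono_set (hslice a h0 (lt_of_le_of_lt hab hb1))
      (Filter.Eventually.of_forall fun x => hν.1 _)
      ((Set.Ioo_subset_Ioo hab le_rfl).eventuallyLE)
  have hcomp := aux_compare hK hCv hch hmono (fun r hr => hwnn r hr.1 hr.2)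
  rw [← hβdef] at hcomp
  have hCv0 : (0:ℝ) < Cv := by linarith
  have hpart1 : ∀ r ∈ Set.Ico (0 : ℝ) 1,
      (∫⁻ t in Set.Ioo r 1,
          ENNReal.ofReal (Real.log (Real.exp 1 / (1 - t)) * (what ν t / (1 - t)))) ≤
        ENNReal.ofReal ((Cv / β + 4 * Cv / β ^ 2) *
          (what ν r * Real.log (Real.exp 1 / (1 - r)))) := by
    intro r hr
    exact aux_part1 hCv0 hβ hcomp (fun r h0 h1 => hwnn r h0 h1) hr.1 hr.2
  have hpart2 : ∀ ν' : ℂ → ℝ, IsRadialWeight ν' → ∀ r ∈ Set.Ico (0 : ℝ) 1,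
      ENNReal.ofReal (what ν' r * Real.log (Real.exp 1 / (1 - r))) ≤
        ∫⁻ t in Set.Ioo r 1,
          ENNReal.ofReal (Real.log (Real.exp 1 / (1 - t)) * ν' ((t : ℝ) : ℂ)) := by
    intro ν' hν' r hr
    have := aux_part2 (fun s => ν' ((s : ℝ) : ℂ)) (fun s => hν'.1 _) r hr.1 hr.2
    simpa [what] using this
  refine ⟨⟨Cv / β + 4 * Cv / β ^ 2, by positivity, hpart1⟩, hpart2,
    ⟨Cv / β + 4 * Cv / β ^ 2, by positivity, ?_⟩⟩
  intro r hr
  calc (∫⁻ t in Set.Ioo r 1,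
        ENNReal.ofReal (Real.log (Real.exp 1 / (1 - t)) * (what ν t / (1 - t))))
      ≤ ENNReal.ofReal ((Cv / β + 4 * Cv / β ^ 2) *
          (what ν r * Real.log (Real.exp 1 / (1 - r)))) := hpart1 r hr
    _ = ENNReal.ofReal (Cv / β + 4 * Cv / β ^ 2) *
          ENNReal.ofReal (what ν r * Real.log (Real.exp 1 / (1 - r))) :=
        ENNReal.ofReal_mul (by positivity)
    _ ≤ _ := mul_le_mul_right (hpart2 ν hν r hr) _
end
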